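/- arXiv:2511.08278 — 10 statements merged into one kernel-verified Lean document; each statement's English description precedes it below -/
import Mathlib

section
/- Let N, R_r, K_c be positive integers with R_r ≥ K_c, let 𝒟 ⊆ {1,…,N} with N − R_r + K_c − |𝒟| ≥ 1, and let d : {1,…,N} → ℝ be nonnegative. If for every subset X ⊆ {1,…,N}∖𝒟 with |X| = R_r − K_c one has ∑_{n ∈ {1,…,N}∖X∖𝒟} d(n) ≥ 1, then ∑_{n ∈ {1,…,N}∖𝒟} d(n) ≥ (N − |𝒟|)/(N − R_r + K_c − |𝒟|). -/
/-!
Double counting over the `t`-subsets `X` of the surviving servers `A`, where `t = R_r - K_c`: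
each server of `A` lies outside exactly `C(|A| - 1, t)` of them, so summing the hypothesis over
all `X` gives `C(|A|, t) ≤ C(|A| - 1, t) · ∑_A d`, and `|A| · C(|A| - 1, t) = (|A| - t) · C(|A|, t)`.
-/

open Finset

namespace Finset

variable {α M : Type*} [DecidableEq α]

theorem sum_powersetCard_sum_sdiff [AddCommMonoid M] (s : Finset α) (t : ℕ) (f : α → M) :
    ∑ X ∈ s.powersetCard t, ∑ a ∈ s \ X, f a = (#s - 1).choose t • ∑ a ∈ s, f a := by
  have avoiding (a : α) (ha : a ∈ s) :
      (s.powersetCard t).filter (fun X => a ∉ X) = (s.erase a).powersetCard t := by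
    ext X
    simp only [mem_filter, mem_powersetCard, subset_erase]
    tauto
  simp_rw [sdiff_eq_filter, sum_filter, smul_sum]
  rw [sum_comm]
  refine sum_congr rfl fun a ha => ?_
  rw [← sum_filter, sum_const, avoiding a ha, card_powersetCard, card_erase_of_mem ha]

theorem div_card_sub_le_sum_of_one_le_sum_sdiff {K : Type*} [Field K] [LinearOrder K]
    [IsStrictOrderedRing K] (s : Finset α) {t : ℕ} (ht : t < #s) (f : α → K)
    (h : ∀ X ∈ s.powersetCard t, 1 ≤ ∑ a ∈ s \ X, f a) :
    (#s : K) / (#s - t) ≤ ∑ a ∈ s, f a := by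
  obtain ⟨n, hn⟩ : ∃ n, #s = n + 1 := ⟨#s - 1, by omega⟩
  have double_count : ((#s).choose t : K) ≤ (n.choose t : K) * ∑ a ∈ s, f a := by
    calc ((#s).choose t : K) = ∑ X ∈ s.powersetCard t, (1 : K) := by simp
      _ ≤ ∑ X ∈ s.powersetCard t, ∑ a ∈ s \ X, f a := sum_le_sum h
      _ = (n.choose t : K) * ∑ a ∈ s, f a := by
        rw [sum_powersetCard_sum_sdiff, nsmul_eq_mul, hn, Nat.add_sub_cancel]
  have absorption : (n.choose t : K) * #s = (#s).choose t * (#s - t) := by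
    have := Nat.choose_mul_succ_eq n t
    rw [← hn] at this
    rw [← Nat.cast_sub ht.le]
    exact_mod_cast this
  have hchoose : (0 : K) < (#s).choose t := by exact_mod_cast Nat.choose_pos ht.le
  have hgap : (0 : K) < #s - t := sub_pos.mpr (by exact_mod_cast ht)
  rw [div_le_iff₀ hgap]
  refine le_of_mul_le_mul_left ?_ hchoose
  calc ((#s).choose t : K) * #s ≤ (n.choose t : K) * (∑ a ∈ s, f a) * #s := by gcongr
    _ = ((#s).choose t : K) * ((∑ a ∈ s, f a) * (#s - t)) := by
      rw [mul_right_comm, absorption]; ring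

end Finset

theorem stmt_1_general (N R_r K_c : ℕ)
    (hKR : K_c ≤ R_r)
    (𝒟 : Finset ℕ) (h𝒟 : 𝒟 ⊆ Finset.Icc 1 N)
    (hcard : 1 ≤ (N : ℤ) - (R_r : ℤ) + (K_c : ℤ) - (𝒟.card : ℤ))
    (d : ℕ → ℝ)
    (h : ∀ X ⊆ Finset.Icc 1 N \ 𝒟, X.card = R_r - K_c →
      1 ≤ ∑ n ∈ (Finset.Icc 1 N \ X) \ 𝒟, d n) :
    ((N : ℝ) - (𝒟.card : ℝ)) / ((N : ℝ) - (R_r : ℝ) + (K_c : ℝ) - (𝒟.card : ℝ)) ≤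
      ∑ n ∈ Finset.Icc 1 N \ 𝒟, d n := by
  have hA : #(Icc 1 N \ 𝒟) = N - #𝒟 := by rw [card_sdiff_of_subset h𝒟, Nat.card_Icc]; rfl
  have hDN : #𝒟 ≤ N := by simpa using card_le_card h𝒟
  have ht : R_r - K_c < #(Icc 1 N \ 𝒟) := by omega
  have key := div_card_sub_le_sum_of_one_le_sum_sdiff (Icc 1 N \ 𝒟) ht d fun X hX => by
    rw [mem_powersetCard] at hX
    simpa only [sdiff_sdiff_comm] using h X hX.1 hX.2
  rw [hA, Nat.cast_sub hDN, Nat.cast_sub hKR] at key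
  exact le_of_eq_of_le (by ring) key

/-- Averaged download-cost lower bound `C_r ≥ (N - |𝒟|)/(N - R_r + K_c - |𝒟|)`
(Remark 1, case `S ≥ K_c`). -/
theorem stmt_1 (N R_r K_c : ℕ) (hN : 0 < N) (hR : 0 < R_r) (hK : 0 < K_c)
    (hKR : K_c ≤ R_r)
    (𝒟 : Finset ℕ) (h𝒟 : 𝒟 ⊆ Finset.Icc 1 N)
    (hcard : 1 ≤ (N : ℤ) - (R_r : ℤ) + (K_c : ℤ) - (𝒟.card : ℤ))
    (d : ℕ → ℝ) (hd : ∀ n ∈ Finset.Icc 1 N, 0 ≤ d n)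
    (h : ∀ X ⊆ Finset.Icc 1 N \ 𝒟, X.card = R_r - K_c →
      1 ≤ ∑ n ∈ (Finset.Icc 1 N \ X) \ 𝒟, d n) :
    ((N : ℝ) - (𝒟.card : ℝ)) / ((N : ℝ) - (R_r : ℝ) + (K_c : ℝ) - (𝒟.card : ℝ)) ≤
      ∑ n ∈ Finset.Icc 1 N \ 𝒟, d n :=
  stmt_1_general N R_r K_c hKR 𝒟 h𝒟 hcard d h
end

section
/- Let N, R_r, X_t be natural numbers, let 𝒟 ⊆ {1,…,N} with R_r − X_t − |𝒟| ≥ 1 and R_r − |𝒟| ≤ N − |𝒟|, and let u : {1,…,N} → ℝ be nonnegative. Suppose that for every subset R ⊆ {1,…,N}∖𝒟 with |R| = R_r − |𝒟| and every subset X ⊆ R with |X| = X_t one has ∑_{n ∈ R∖X} u(n) ≥ 1. Then ∑_{n ∈ {1,…,N}∖𝒟} u(n) ≥ (N − |𝒟|)/(R_r − X_t − |𝒟|). -/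
/-!
Shrinking a read set `R` by an `X_t`-subset leaves an arbitrary subset of size
`q = R_r - X_t - |𝒟|` of the `N - |𝒟|` surviving servers, so every such `q`-subset carries
upload cost at least `1`. Take a `q`-subset `T` of minimal cost `m`; exchanging one element
of `T` for an outside server `y` cannot lower the cost, so `u y` dominates every cost in `T`,
whence `q u y ≥ m ≥ 1`. Summing gives `q ∑ u ≥ q m + (N - |𝒟| - q) m = (N - |𝒟|) m`.
-/

open Finset

namespace Finset

variable {α : Type*} [DecidableEq α] {S T : Finset α} {f : α → ℝ} {q : ℕ}

lemma le_of_isMinOn_sum_powersetCard (hT : T ∈ S.powersetCard q)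
    (hmin : IsMinOn (fun T ↦ ∑ n ∈ T, f n) (S.powersetCard q) T)
    {x y : α} (hx : x ∈ T) (hy : y ∈ S \ T) : f x ≤ f y := by
  obtain ⟨hTS, hTq⟩ := mem_powersetCard.mp hT
  obtain ⟨hyS, hyT⟩ := mem_sdiff.mp hy
  have hyx : y ∉ T.erase x := fun h ↦ hyT (mem_of_mem_erase h)
  have hswap : insert y (T.erase x) ∈ S.powersetCard q := by
    refine mem_powersetCard.mpr ⟨insert_subset hyS ((erase_subset x T).trans hTS), ?_⟩
    rw [card_insert_of_notMem hyx, card_erase_of_mem hx, hTq]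
    exact Nat.succ_pred_eq_of_pos (hTq ▸ card_pos.mpr ⟨x, hx⟩)
  have hcost : ∑ n ∈ T, f n ≤ ∑ n ∈ insert y (T.erase x), f n := hmin hswap
  rw [sum_insert hyx, sum_erase_eq_sub hx] at hcost
  linarith

lemma card_mul_sum_le_mul_sum_of_isMinOn (hT : T ∈ S.powersetCard q)
    (hmin : IsMinOn (fun T ↦ ∑ n ∈ T, f n) (S.powersetCard q) T) :
    #S * ∑ n ∈ T, f n ≤ q * ∑ n ∈ S, f n := by
  obtain ⟨hTS, hTq⟩ := mem_powersetCard.mp hT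
  have houtside : ∀ y ∈ S \ T, ∑ n ∈ T, f n ≤ q * f y := fun y hy ↦ by
    calc ∑ n ∈ T, f n ≤ ∑ _n ∈ T, f y :=
          sum_le_sum fun x hx ↦ le_of_isMinOn_sum_powersetCard hT hmin hx hy
      _ = q * f y := by rw [sum_const, hTq, nsmul_eq_mul]
  have hcard : (#S : ℝ) = q + #(S \ T) := by
    rw [card_sdiff_of_subset hTS, hTq, Nat.cast_sub (hTq ▸ card_le_card hTS)]; ring
  calc (#S : ℝ) * ∑ n ∈ T, f n
      = q * ∑ n ∈ T, f n + ∑ _y ∈ S \ T, ∑ n ∈ T, f n := by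
        rw [hcard, sum_const, nsmul_eq_mul]; ring
    _ ≤ q * ∑ n ∈ T, f n + ∑ y ∈ S \ T, q * f y := by gcongr with y hy; exact houtside y hy
    _ = q * ∑ n ∈ S, f n := by rw [← mul_sum, ← mul_add, add_comm, sum_sdiff hTS]

theorem card_mul_le_mul_sum_of_le_sum_powersetCard (hq : q ≤ #S) {c : ℝ}
    (h : ∀ T ∈ S.powersetCard q, c ≤ ∑ n ∈ T, f n) :
    #S * c ≤ q * ∑ n ∈ S, f n := by
  obtain ⟨T, hT, hmin⟩ := exists_min_image (S.powersetCard q) (fun T ↦ ∑ n ∈ T, f n)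
    (powersetCard_nonempty.mpr hq)
  calc (#S : ℝ) * c ≤ #S * ∑ n ∈ T, f n := by gcongr; exact h T hT
    _ ≤ q * ∑ n ∈ S, f n := card_mul_sum_le_mul_sum_of_isMinOn hT hmin

lemma le_sum_powersetCard_sub_of_le_sum_sdiff {k x : ℕ} {c : ℝ} (hxk : x ≤ k) (hk : k ≤ #S)
    (h : ∀ R ⊆ S, #R = k → ∀ X ⊆ R, #X = x → c ≤ ∑ n ∈ R \ X, f n) :
    ∀ T ∈ S.powersetCard (k - x), c ≤ ∑ n ∈ T, f n := by
  intro T hT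
  obtain ⟨hTS, hTq⟩ := mem_powersetCard.mp hT
  obtain ⟨R, hTR, hRS, hRk⟩ := exists_subsuperset_card_eq hTS (by omega) hk
  have hX : #(R \ T) = x := by rw [card_sdiff_of_subset hTR]; omega
  simpa only [sdiff_sdiff_eq_self hTR] using h R hRS hRk (R \ T) sdiff_subset hX

end Finset

theorem stmt_2_general (N R_r X_t : ℕ)
    (𝒟 : Finset ℕ) (h𝒟 : 𝒟 ⊆ Finset.Icc 1 N)
    (h1 : 1 ≤ (R_r : ℤ) - (X_t : ℤ) - (𝒟.card : ℤ))
    (h2 : (R_r : ℤ) - (𝒟.card : ℤ) ≤ (N : ℤ) - (𝒟.card : ℤ))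
    (u : ℕ → ℝ)
    (h : ∀ R ⊆ Finset.Icc 1 N \ 𝒟, (R.card : ℤ) = (R_r : ℤ) - (𝒟.card : ℤ) →
      ∀ X ⊆ R, X.card = X_t → 1 ≤ ∑ n ∈ R \ X, u n) :
    ((N : ℝ) - (𝒟.card : ℝ)) / ((R_r : ℝ) - (X_t : ℝ) - (𝒟.card : ℝ)) ≤
      ∑ n ∈ Finset.Icc 1 N \ 𝒟, u n := by
  set d := #𝒟
  set q := R_r - d - X_t
  have hcard : #(Finset.Icc 1 N \ 𝒟) = N - d := by
    rw [card_sdiff_of_subset h𝒟, Nat.card_Icc]; omega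
  have hsubsets : ∀ T ∈ (Finset.Icc 1 N \ 𝒟).powersetCard q, 1 ≤ ∑ n ∈ T, u n :=
    le_sum_powersetCard_sub_of_le_sum_sdiff (k := R_r - d) (by omega) (by omega)
      fun R hR hRk ↦ h R hR (by omega)
  have hbound := card_mul_le_mul_sum_of_le_sum_powersetCard (by omega) hsubsets
  have hq : (q : ℝ) = R_r - X_t - d := by exact_mod_cast (by omega : (q : ℤ) = R_r - X_t - d)
  have hN : ((N - d : ℕ) : ℝ) = N - d := by exact_mod_cast (by omega : ((N - d : ℕ) : ℤ) = N - d)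
  rw [hcard, hN, hq, mul_one] at hbound
  rw [div_le_iff₀ (by exact_mod_cast (by omega : (0 : ℤ) < R_r - X_t - d))]
  linarith

/-- Averaged upload-cost lower bound `C_u ≥ (N - |𝒟|)/(R_r - X_t - |𝒟|)` (Remark 1). -/
theorem stmt_2 (N R_r X_t : ℕ)
    (𝒟 : Finset ℕ) (h𝒟 : 𝒟 ⊆ Finset.Icc 1 N)
    (h1 : 1 ≤ (R_r : ℤ) - (X_t : ℤ) - (𝒟.card : ℤ))
    (h2 : (R_r : ℤ) - (𝒟.card : ℤ) ≤ (N : ℤ) - (𝒟.card : ℤ))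
    (u : ℕ → ℝ) (hu : ∀ n ∈ Finset.Icc 1 N, 0 ≤ u n)
    (h : ∀ R ⊆ Finset.Icc 1 N \ 𝒟, (R.card : ℤ) = (R_r : ℤ) - (𝒟.card : ℤ) →
      ∀ X ⊆ R, X.card = X_t → 1 ≤ ∑ n ∈ R \ X, u n) :
    ((N : ℝ) - (𝒟.card : ℝ)) / ((R_r : ℝ) - (X_t : ℝ) - (𝒟.card : ℝ)) ≤
      ∑ n ∈ Finset.Icc 1 N \ 𝒟, u n :=
  stmt_2_general N R_r X_t 𝒟 h𝒟 h1 h2 u h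
end

section
/- Let T₁ and T₂ be disjoint finite sets, let k be a natural number with k < |T₁|, and let d : T₁ ∪ T₂ → ℝ be nonnegative. If for every subset X ⊆ T₁ with |X| = k one has ∑_{n ∈ (T₁ ∪ T₂)∖X} d(n) ≥ 1, then ∑_{n ∈ T₁} d(n) + (|T₁|/(|T₁| − k)) · ∑_{n ∈ T₂} d(n) ≥ |T₁|/(|T₁| − k). -/
/-- Weighted averaging inequality (step (21) of the download-cost converse). -/
theorem stmt_3 {α : Type*} [DecidableEq α] (T₁ T₂ : Finset α) (hdisj : Disjoint T₁ T₂)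
    (k : ℕ) (hk : k < T₁.card)
    (d : α → ℝ) (hd : ∀ n ∈ T₁ ∪ T₂, 0 ≤ d n)
    (h : ∀ X ⊆ T₁, X.card = k → 1 ≤ ∑ n ∈ (T₁ ∪ T₂) \ X, d n) :
    (T₁.card : ℝ) / ((T₁.card : ℝ) - (k : ℝ)) ≤
      ∑ n ∈ T₁, d n +
        ((T₁.card : ℝ) / ((T₁.card : ℝ) - (k : ℝ))) * ∑ n ∈ T₂, d n := by
  classical
  set m := T₁.card with hm
  set S₁ := ∑ n ∈ T₁, d n with hS₁
  set S₂ := ∑ n ∈ T₂, d n with hS₂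
  set c : ℝ := ((m - 1).choose k : ℝ) with hc
  have hc_pos : 0 < c := by
    have h0 : 0 < (m - 1).choose k := Nat.choose_pos (Nat.le_sub_one_of_lt hk)
    rw [hc]; exact_mod_cast h0
  -- key counting lemma : the swap
  have swap : ∑ X ∈ T₁.powersetCard k, ∑ n ∈ T₁ \ X, d n = c * S₁ := by
    have step1 : ∀ X : Finset α, ∑ n ∈ T₁ \ X, d n
        = ∑ n ∈ T₁, if n ∉ X then d n else 0 := by
      intro X
      rw [Finset.sdiff_eq_filter, Finset.sum_filter]
    simp_rw [step1]
    rw [Finset.sum_comm]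
    have step2 : ∀ n ∈ T₁,
        (∑ X ∈ T₁.powersetCard k, if n ∉ X then d n else 0) = c * d n := by
      intro n hn
      rw [← Finset.sum_filter]
      have hfil : (T₁.powersetCard k).filter (fun X => n ∉ X)
          = (T₁.erase n).powersetCard k := by
        ext X
        simp only [Finset.mem_filter, Finset.mem_powersetCard, Finset.subset_erase]
        tauto
      rw [hfil, Finset.sum_const, Finset.card_powersetCard,
        Finset.card_erase_of_mem hn, nsmul_eq_mul]
    rw [Finset.sum_congr rfl step2, ← Finset.mul_sum]
  -- averaging the constraint
  have key : (m.choose k : ℝ) ≤ c * S₁ + (m.choose k : ℝ) * S₂ := by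
    have hsum : ∀ X ∈ T₁.powersetCard k,
        ∑ n ∈ (T₁ ∪ T₂) \ X, d n = ∑ n ∈ T₁ \ X, d n + S₂ := by
      intro X hX
      rw [Finset.mem_powersetCard] at hX
      have hXT₂ : Disjoint X T₂ := Finset.disjoint_of_subset_left hX.1 hdisj
      have hU : (T₁ ∪ T₂) \ X = (T₁ \ X) ∪ T₂ := by
        rw [Finset.union_sdiff_distrib, Finset.sdiff_eq_self_of_disjoint hXT₂.symm]
      rw [hU, Finset.sum_union (Finset.disjoint_of_subset_left Finset.sdiff_subset hdisj)]
    calc (m.choose k : ℝ) = ∑ _X ∈ T₁.powersetCard k, (1 : ℝ) := by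
          simp [Finset.card_powersetCard]; rfl
      _ ≤ ∑ X ∈ T₁.powersetCard k, ∑ n ∈ (T₁ ∪ T₂) \ X, d n := by
          refine Finset.sum_le_sum fun X hX => ?_
          rw [Finset.mem_powersetCard] at hX
          exact h X hX.1 hX.2
      _ = ∑ X ∈ T₁.powersetCard k, (∑ n ∈ T₁ \ X, d n + S₂) :=
          Finset.sum_congr rfl hsum
      _ = (∑ X ∈ T₁.powersetCard k, ∑ n ∈ T₁ \ X, d n)
            + (m.choose k : ℝ) * S₂ := by
          rw [Finset.sum_add_distrib, Finset.sum_const, Finset.card_powersetCard,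
            nsmul_eq_mul]
      _ = c * S₁ + (m.choose k : ℝ) * S₂ := by rw [swap]
  -- the binomial identity : m * C(m-1,k) = C(m,k) * (m-k)
  have hid : m * (m - 1).choose k = m.choose k * (m - k) := by
    have h1 := Nat.add_one_mul_choose_eq (m - 1) k
    have hm1 : m - 1 + 1 = m := Nat.succ_pred_eq_of_pos (Nat.lt_of_le_of_lt (Nat.zero_le k) hk)
    rw [hm1] at h1
    rw [h1, Nat.choose_succ_right_eq]
  have hmk_pos : (0 : ℝ) < (m : ℝ) - k := by
    have : (k : ℝ) < m := by exact_mod_cast hk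
    linarith
  have hidR : (m : ℝ) * c = (m.choose k : ℝ) * ((m : ℝ) - (k : ℝ)) := by
    have h2 : ((m * (m - 1).choose k : ℕ) : ℝ) = ((m.choose k * (m - k) : ℕ) : ℝ) := by
      exact_mod_cast congrArg (fun x : ℕ => (x : ℝ)) hid
    push_cast [Nat.cast_sub hk.le] at h2
    rw [hc]; exact_mod_cast h2
  have hC : (m.choose k : ℝ) = c * ((m : ℝ) / ((m : ℝ) - (k : ℝ))) := by
    field_simp
    linarith [hidR]
  rw [hC] at key
  have : c * ((m : ℝ) / ((m : ℝ) - (k : ℝ)))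
      ≤ c * (S₁ + ((m : ℝ) / ((m : ℝ) - (k : ℝ))) * S₂) := by ring_nf; ring_nf at key; linarith
  exact le_of_mul_le_mul_left (by linarith [this]) hc_pos
end

section
/- Let T₁ and T₂ be disjoint finite sets, let r be a natural number with 1 ≤ r ≤ |T₁|, and let u : T₁ ∪ T₂ → ℝ be nonnegative. If for every subset Y ⊆ T₁ with |Y| = r one has ∑_{n ∈ T₂ ∪ Y} u(n) ≥ 1, then ∑_{n ∈ T₁} u(n) + (|T₁|/r) · ∑_{n ∈ T₂} u(n) ≥ |T₁|/r. -/
/-! Average the hypothesis over all `r`-subsets `Y` of `T₁`. Each element of `T₁` lies in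
`C(|T₁|-1, r-1)` of the `C(|T₁|, r)` subsets, so the average of `∑_{T₂ ∪ Y} u` is
`∑_{T₂} u + (r / |T₁|) ∑_{T₁} u`, using `C(|T₁|, r) r = |T₁| C(|T₁|-1, r-1)`. -/

open Finset

section

variable {α M : Type*} [DecidableEq α]

theorem Nat.choose_mul_eq_mul_choose_pred {n k : ℕ} (hk : k ≠ 0) :
    n.choose k * k = n * (n - 1).choose (k - 1) := by
  obtain ⟨k, rfl⟩ := Nat.exists_eq_succ_of_ne_zero hk
  cases n with
  | zero => simp
  | succ n => simpa [mul_comm] using (Nat.add_one_mul_choose_eq n k).symm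

theorem Finset.card_filter_mem_powersetCard {s : Finset α} {a : α} (ha : a ∈ s) {r : ℕ}
    (hr : r ≠ 0) : #{t ∈ s.powersetCard r | a ∈ t} = (#s - 1).choose (r - 1) := by
  simpa using card_filter_powersetCard_subset {a} s r (singleton_subset_iff.2 ha)
    (by simpa [Nat.one_le_iff_ne_zero])

theorem Finset.sum_powersetCard_sum [AddCommMonoid M] (s : Finset α) {r : ℕ} (hr : r ≠ 0)
    (f : α → M) :
    ∑ t ∈ s.powersetCard r, ∑ a ∈ t, f a = (#s - 1).choose (r - 1) • ∑ a ∈ s, f a := by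
  rw [sum_comm' (t' := s) (s' := fun a => {t ∈ s.powersetCard r | a ∈ t}), smul_sum]
  · exact sum_congr rfl fun a ha => by rw [sum_const, card_filter_mem_powersetCard ha hr]
  · intro t a
    simp only [mem_filter, mem_powersetCard]
    exact ⟨fun ⟨⟨hts, htr⟩, hat⟩ => ⟨⟨⟨hts, htr⟩, hat⟩, hts hat⟩,
      fun ⟨⟨⟨hts, htr⟩, hat⟩, _⟩ => ⟨⟨hts, htr⟩, hat⟩⟩

theorem Finset.sum_powersetCard_sum_union [AddCommMonoid M] {s t : Finset α} (hst : Disjoint s t)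
    {r : ℕ} (hr : r ≠ 0) (f : α → M) :
    ∑ Y ∈ s.powersetCard r, ∑ a ∈ t ∪ Y, f a
      = (#s).choose r • ∑ a ∈ t, f a + (#s - 1).choose (r - 1) • ∑ a ∈ s, f a := by
  rw [← sum_powersetCard_sum s hr, ← card_powersetCard, ← sum_const, ← sum_add_distrib]
  refine sum_congr rfl fun Y hY => sum_union ?_
  exact hst.symm.mono_right (mem_powersetCard.1 hY).1

end

theorem stmt_4_general {α : Type*} [DecidableEq α] (T₁ T₂ : Finset α) (hdisj : Disjoint T₁ T₂)
    (r : ℕ) (hr : 1 ≤ r) (hrT : r ≤ T₁.card)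
    (u : α → ℝ)
    (h : ∀ Y ⊆ T₁, Y.card = r → 1 ≤ ∑ n ∈ T₂ ∪ Y, u n) :
    (T₁.card : ℝ) / (r : ℝ) ≤
      ∑ n ∈ T₁, u n + ((T₁.card : ℝ) / (r : ℝ)) * ∑ n ∈ T₂, u n := by
  have hr₀ : r ≠ 0 := by omega
  set C : ℝ := ↑((#T₁).choose r)
  set D : ℝ := ↑((#T₁ - 1).choose (r - 1))
  have hD : 0 < D := Nat.cast_pos.2 (Nat.choose_pos (by omega))
  have hCD : C * r = #T₁ * D := by
    simp only [C, D]; exact_mod_cast Nat.choose_mul_eq_mul_choose_pred hr₀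
  have havg : C ≤ C * ∑ n ∈ T₂, u n + D * ∑ n ∈ T₁, u n := by
    have := card_nsmul_le_sum (T₁.powersetCard r) _ 1
      fun Y hY => h Y (mem_powersetCard.1 hY).1 (mem_powersetCard.1 hY).2
    simpa [sum_powersetCard_sum_union hdisj hr₀, C, D] using this
  have key : (#T₁ : ℝ) ≤ r * ∑ n ∈ T₁, u n + #T₁ * ∑ n ∈ T₂, u n := by
    refine le_of_mul_le_mul_right ?_ hD
    calc (#T₁ : ℝ) * D = C * r := hCD.symm
      _ ≤ (C * ∑ n ∈ T₂, u n + D * ∑ n ∈ T₁, u n) * r := by gcongr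
      _ = (r * ∑ n ∈ T₁, u n + #T₁ * ∑ n ∈ T₂, u n) * D := by
        linear_combination (∑ n ∈ T₂, u n) * hCD
  calc (#T₁ : ℝ) / r ≤ (r * ∑ n ∈ T₁, u n + #T₁ * ∑ n ∈ T₂, u n) / r := by gcongr
    _ = _ := by field_simp

/-- Weighted averaging inequality (step (38) of the upload-cost converse). -/
theorem stmt_4 {α : Type*} [DecidableEq α] (T₁ T₂ : Finset α) (hdisj : Disjoint T₁ T₂)
    (r : ℕ) (hr : 1 ≤ r) (hrT : r ≤ T₁.card)
    (u : α → ℝ) (hu : ∀ n ∈ T₁ ∪ T₂, 0 ≤ u n)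
    (h : ∀ Y ⊆ T₁, Y.card = r → 1 ≤ ∑ n ∈ T₂ ∪ Y, u n) :
    (T₁.card : ℝ) / (r : ℝ) ≤
      ∑ n ∈ T₁, u n + ((T₁.card : ℝ) / (r : ℝ)) * ∑ n ∈ T₂, u n :=
  stmt_4_general T₁ T₂ hdisj r hr hrT u h
end

section
/- Let N, R_r, S, K_c be positive integers with S < K_c and S + 1 ≤ R_r, let 𝒟 ⊆ {1,…,N}, and set D₁ = 𝒟 ∩ {S+1,…,N} and D₂ = 𝒟 ∩ {1,…,S}. Assume N − |D₁| − R_r + 1 ≥ 1. Let d : {1,…,N} → ℝ be nonnegative with d(n) ≤ 1/K_c for all n ∈ {1,…,S}∖𝒟, and suppose that for every subset X ⊆ {S+1,…,N}∖𝒟 with |X| = R_r − S − 1 one has ∑_{n ∈ ({1,…,N}∖𝒟)∖X} d(n) ≥ 1. Then ∑_{n ∈ {1,…,N}∖𝒟} d(n) ≥ (N − S − |D₁|)/(N − |D₁| − R_r + 1) − (S − |D₂|)(R_r − S − 1)/(K_c (N − |D₁| − R_r + 1)). -/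
lemma aux_count (s : Finset ℕ) (k : ℕ) (a : ℕ) (ha : a ∈ s) :
    ((s.powersetCard (k+1)).filter (fun X => a ∈ X)).card = (s.card - 1).choose k := by
  conv_lhs => rw [← Finset.insert_erase ha]
  rw [Finset.powersetCard_succ_insert (Finset.notMem_erase a s), Finset.filter_union]
  have h1 : ((s.erase a).powersetCard (k+1)).filter (fun X => a ∈ X) = ∅ := by
    apply Finset.filter_false_of_mem
    intro X hX hmem
    exact Finset.notMem_erase a s ((Finset.mem_powersetCard.1 hX).1 hmem)
  have h2 : (((s.erase a).powersetCard k).image (insert a)).filter (fun X => a ∈ X)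
      = ((s.erase a).powersetCard k).image (insert a) := by
    apply Finset.filter_true_of_mem
    intro X hX
    simp only [Finset.mem_image] at hX
    obtain ⟨Y, _, rfl⟩ := hX
    exact Finset.mem_insert_self a Y
  rw [h1, h2, Finset.empty_union, Finset.card_image_of_injOn, Finset.card_powersetCard,
    Finset.card_erase_of_mem ha]
  intro X hX Y hY hxy
  have haX : a ∉ X := fun hc => Finset.notMem_erase a s ((Finset.mem_powersetCard.1 hX).1 hc)
  have haY : a ∉ Y := fun hc => Finset.notMem_erase a s ((Finset.mem_powersetCard.1 hY).1 hc)
  rw [← Finset.erase_insert haX, ← Finset.erase_insert haY, hxy]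

lemma aux_sum (s : Finset ℕ) (k : ℕ) (f : ℕ → ℝ) :
    ∑ X ∈ s.powersetCard (k+1), ∑ n ∈ X, f n
      = ∑ n ∈ s, ((s.card - 1).choose k : ℝ) * f n := by
  have h1 : ∀ X ∈ s.powersetCard (k+1), ∑ n ∈ X, f n = ∑ n ∈ s, if n ∈ X then f n else 0 := by
    intro X hX
    rw [Finset.sum_ite_mem, Finset.inter_eq_right.2 (Finset.mem_powersetCard.1 hX).1]
  rw [Finset.sum_congr rfl h1, Finset.sum_comm]
  refine Finset.sum_congr rfl fun n hn => ?_
  rw [Finset.sum_ite, Finset.sum_const, Finset.sum_const_zero, add_zero,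
    aux_count s k n hn]
  simp [mul_comm]

/-- Download-cost converse for the partially storage constrained setting
(`S < K_c`, regime `|𝒟| > N - Ω - K_c`):
`C_r ≥ (N - S - |D₁|)/(N - |D₁| - R_r + 1) - (S - |D₂|)(R_r - S - 1)/(K_c (N - |D₁| - R_r + 1))`. -/
theorem stmt_5 (N R_r S K_c : ℕ) (hN : 0 < N) (hR : 0 < R_r) (hS : 0 < S) (hK : 0 < K_c)
    (hSK : S < K_c) (hSR : S + 1 ≤ R_r)
    (𝒟 : Finset ℕ) (h𝒟 : 𝒟 ⊆ Finset.Icc 1 N)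
    (D₁ D₂ : Finset ℕ)
    (hD₁ : D₁ = 𝒟 ∩ Finset.Icc (S + 1) N) (hD₂ : D₂ = 𝒟 ∩ Finset.Icc 1 S)
    (hcard : D₁.card + R_r ≤ N)
    (d : ℕ → ℝ) (hd : ∀ n ∈ Finset.Icc 1 N, 0 ≤ d n)
    (hcap : ∀ n ∈ Finset.Icc 1 S \ 𝒟, d n ≤ 1 / (K_c : ℝ))
    (h : ∀ X ⊆ Finset.Icc (S + 1) N \ 𝒟, X.card = R_r - S - 1 →
      1 ≤ ∑ n ∈ (Finset.Icc 1 N \ 𝒟) \ X, d n) :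
    ((N : ℝ) - S - D₁.card) / ((N : ℝ) - D₁.card - R_r + 1) -
        ((S : ℝ) - D₂.card) * ((R_r : ℝ) - S - 1) /
          ((K_c : ℝ) * ((N : ℝ) - D₁.card - R_r + 1)) ≤
      ∑ n ∈ Finset.Icc 1 N \ 𝒟, d n := by
  classical
  set A : Finset ℕ := Finset.Icc 1 N \ 𝒟 with hA
  set U : Finset ℕ := Finset.Icc (S+1) N \ 𝒟 with hU
  set C : Finset ℕ := Finset.Icc 1 S \ 𝒟 with hC
  set t : ℕ := R_r - S - 1 with ht
  -- basic card facts
  have hD₁card : D₁.card ≤ N - S := by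
    rw [hD₁]
    calc (𝒟 ∩ Finset.Icc (S+1) N).card ≤ (Finset.Icc (S+1) N).card :=
          Finset.card_le_card (Finset.inter_subset_right)
      _ = N - S := by rw [Nat.card_Icc]; omega
  have hD₂card : D₂.card ≤ S := by
    rw [hD₂]
    calc (𝒟 ∩ Finset.Icc 1 S).card ≤ (Finset.Icc 1 S).card :=
          Finset.card_le_card (Finset.inter_subset_right)
      _ = S := by rw [Nat.card_Icc]; omega
  have hSN : S + 1 ≤ N := by omega
  have hUcard : U.card = N - S - D₁.card := by
    rw [hU, hD₁]
    have : Finset.Icc (S+1) N \ 𝒟 = Finset.Icc (S+1) N \ (𝒟 ∩ Finset.Icc (S+1) N) := by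
      ext x; simp only [Finset.mem_sdiff, Finset.mem_inter]; tauto
    rw [this, Finset.card_sdiff_of_subset Finset.inter_subset_right, Nat.card_Icc]
    omega
  have hCcard : C.card = S - D₂.card := by
    rw [hC, hD₂]
    have : Finset.Icc 1 S \ 𝒟 = Finset.Icc 1 S \ (𝒟 ∩ Finset.Icc 1 S) := by
      ext x; simp only [Finset.mem_sdiff, Finset.mem_inter]; tauto
    rw [this, Finset.card_sdiff_of_subset Finset.inter_subset_right, Nat.card_Icc]
    omega
  have htu : t + 1 ≤ U.card := by rw [hUcard]; omega
  -- split A = C ∪ U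
  have hsplit : A = C ∪ U := by
    rw [hA, hC, hU, ← Finset.union_sdiff_distrib]
    congr 1
    ext x; simp [Finset.mem_Icc]; omega
  have hdisj : Disjoint C U := by
    rw [hC, hU]
    apply Finset.disjoint_of_subset_left Finset.sdiff_subset
    apply Finset.disjoint_of_subset_right Finset.sdiff_subset
    rw [Finset.disjoint_left]
    intro x hx hx'
    simp [Finset.mem_Icc] at hx hx'
    omega
  have hsumsplit : ∑ n ∈ A, d n = ∑ n ∈ C, d n + ∑ n ∈ U, d n := by
    rw [hsplit, Finset.sum_union hdisj]
  have hCsubIcc : C ⊆ Finset.Icc 1 N := by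
    rw [hC]
    exact Finset.sdiff_subset.trans (Finset.Icc_subset_Icc_right (by omega))
  have hUsubIcc : U ⊆ Finset.Icc 1 N := by
    rw [hU]
    exact Finset.sdiff_subset.trans (Finset.Icc_subset_Icc_left (by omega))
  have hUC0 : (0:ℝ) ≤ ∑ n ∈ U, d n := Finset.sum_nonneg fun n hn => hd n (hUsubIcc hn)
  have hCC0 : (0:ℝ) ≤ ∑ n ∈ C, d n := Finset.sum_nonneg fun n hn => hd n (hCsubIcc hn)
  have hCcap : ∑ n ∈ C, d n ≤ (C.card : ℝ) / K_c := by
    calc ∑ n ∈ C, d n ≤ C.card • (1 / (K_c:ℝ)) :=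
          Finset.sum_le_card_nsmul _ _ _ (fun n hn => hcap n hn)
      _ = (C.card : ℝ) / K_c := by rw [nsmul_eq_mul]; ring
  have hUsubA : U ⊆ A := by rw [hsplit]; exact Finset.subset_union_right
  -- key inequality : (u:ℝ) ≤ u * ΣA - t * ΣU
  have hkey : (U.card : ℝ) ≤ (U.card : ℝ) * ∑ n ∈ A, d n - (t : ℝ) * ∑ n ∈ U, d n := by
    rcases Nat.eq_zero_or_pos t with ht0 | htpos
    · have h1 : (1:ℝ) ≤ ∑ n ∈ A, d n := by
        have := h ∅ (Finset.empty_subset _) (by simp [← ht, ht0])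
        simpa using this
      rw [ht0]
      push_cast
      have hA0 : (0:ℝ) ≤ ∑ n ∈ A, d n := by rw [hsumsplit]; linarith
      nlinarith [hA0]
    · obtain ⟨k, hk⟩ : ∃ k, t = k + 1 := ⟨t - 1, by omega⟩
      -- sum over all X in powersetCard t U
      have hsumX : (((U.card).choose t : ℝ)) ≤
          ∑ X ∈ U.powersetCard t, (∑ n ∈ A, d n - ∑ n ∈ X, d n) := by
        have : ∀ X ∈ U.powersetCard t, (1:ℝ) ≤ ∑ n ∈ A, d n - ∑ n ∈ X, d n := by
          intro X hX
          obtain ⟨hXU, hXc⟩ := Finset.mem_powersetCard.1 hX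
          have hXA : X ⊆ A := hXU.trans hUsubA
          have := h X (hU ▸ hXU) (by rw [hXc, ht])
          rw [Finset.sum_sdiff_eq_sub hXA] at this
          linarith
        calc ((U.card).choose t : ℝ) = (U.powersetCard t).card • (1:ℝ) := by
              simp [Finset.card_powersetCard]
          _ ≤ ∑ X ∈ U.powersetCard t, (∑ n ∈ A, d n - ∑ n ∈ X, d n) :=
              Finset.card_nsmul_le_sum _ _ _ this
      rw [Finset.sum_sub_distrib, Finset.sum_const, Finset.card_powersetCard, hk,
        aux_sum U k d, ← Finset.mul_sum] at hsumX
      -- identity : u * choose (u-1) k = choose u (k+1) * (k+1)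
      have hid : U.card * ((U.card - 1).choose k) = (U.card).choose (k+1) * (k+1) := by
        obtain ⟨m, hm⟩ : ∃ m, U.card = m + 1 := ⟨U.card - 1, by omega⟩
        rw [hm]
        simpa using Nat.add_one_mul_choose_eq m k
      have hchoosepos : 0 < ((U.card).choose (k+1) : ℝ) := by
        have : 0 < (U.card).choose (k+1) := Nat.choose_pos (by omega)
        exact_mod_cast this
      have hidR : (U.card : ℝ) * ((U.card - 1).choose k : ℝ)
          = ((U.card).choose (k+1) : ℝ) * (k+1) := by exact_mod_cast hid
      rw [nsmul_eq_mul] at hsumX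
      have hu0 : (0:ℝ) ≤ (U.card : ℝ) := by positivity
      have := mul_le_mul_of_nonneg_left hsumX hu0
      rw [hk]
      push_cast
      nlinarith [this, hidR, hchoosepos, hsumX]
  -- final algebra
  have huR : (U.card : ℝ) = (N:ℝ) - S - D₁.card := by
    rw [hUcard, Nat.cast_sub (by omega : D₁.card ≤ N - S), Nat.cast_sub (by omega : S ≤ N)]
  have htR : (t:ℝ) = (R_r:ℝ) - S - 1 := by
    rw [ht, Nat.cast_sub (by omega : 1 ≤ R_r - S), Nat.cast_sub (by omega : S ≤ R_r)]
    push_cast; ring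
  have hcR : (C.card:ℝ) = (S:ℝ) - D₂.card := by
    rw [hCcard, Nat.cast_sub (by omega : D₂.card ≤ S)]
  have hw : (0:ℝ) < (N:ℝ) - D₁.card - R_r + 1 := by
    have : (t:ℝ) + 1 ≤ (U.card:ℝ) := by exact_mod_cast htu
    rw [huR, htR] at this
    linarith
  have hKR : (0:ℝ) < (K_c:ℝ) := by exact_mod_cast hK
  rw [huR, htR] at hkey
  rw [hcR] at hCcap
  have ht0R : (0:ℝ) ≤ (R_r:ℝ) - S - 1 := by rw [← htR]; positivity
  have h3 : ((R_r:ℝ) - S - 1) * (∑ n ∈ C, d n)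
      ≤ ((R_r:ℝ) - S - 1) * (((S:ℝ) - D₂.card) / K_c) :=
    mul_le_mul_of_nonneg_left hCcap ht0R
  have hUeq : ∑ n ∈ U, d n = ∑ n ∈ A, d n - ∑ n ∈ C, d n := by linarith
  rw [hUeq] at hkey
  have key2 : ((N:ℝ) - S - D₁.card) - ((S:ℝ) - D₂.card) * ((R_r:ℝ) - S - 1) / K_c
      ≤ (∑ n ∈ A, d n) * ((N:ℝ) - D₁.card - R_r + 1) := by
    ring_nf at hkey h3 ⊢
    linarith [hkey, h3]
  have hgoal : ((N : ℝ) - S - D₁.card) / ((N : ℝ) - D₁.card - R_r + 1) -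
        ((S : ℝ) - D₂.card) * ((R_r : ℝ) - S - 1) /
          ((K_c : ℝ) * ((N : ℝ) - D₁.card - R_r + 1))
      = (((N:ℝ) - S - D₁.card) - ((S:ℝ) - D₂.card) * ((R_r:ℝ) - S - 1) / K_c)
          / ((N:ℝ) - D₁.card - R_r + 1) := by
    field_simp
  rw [hgoal, div_le_iff₀ hw]
  exact key2
end

section
/- Let N, R_r, S, K_c, X_t be natural numbers with S < K_c and 1 ≤ K_c, let 𝒟 ⊆ {1,…,N}, and set D₁ = 𝒟 ∩ {S+1,…,N} and D₂ = 𝒟 ∩ {1,…,S}. Assume R_r − S − |D₁| − X_t ≥ 1 and R_r − S − |D₁| − X_t ≤ N − S − |D₁|. Let u : {1,…,N} → ℝ be nonnegative with u(n) ≤ 1/K_c for all n ∈ {1,…,S}∖𝒟, and suppose that for every subset Y ⊆ {S+1,…,N}∖𝒟 with |Y| = R_r − S − |D₁| − X_t one has ∑_{n ∈ ({1,…,S}∖𝒟) ∪ Y} u(n) ≥ 1. Then ∑_{n ∈ {1,…,N}∖𝒟} u(n) ≥ (N − S − |D₁|)/(R_r − S − |D₁| − X_t) − (S − |D₂|)(N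 − R_r + X_t)/(K_c (R_r − S − |D₁| − X_t)). -/
/-!
Averaging the recovery constraint over all `m`-subsets `Y` of the available unconstrained
servers `A`: each server of `A` lies in a fraction `m / |A|` of them, so `|A| (1 - c) ≤ m s`,
where `c` and `s` are the total uploads of the available constrained and unconstrained servers.
The storage cap gives `c ≤ |C| / K_c`, and since `|A| ≥ m` this bounds `c + s` from below.
-/

open Finset

namespace Finset

variable {α : Type*} [DecidableEq α]

theorem sum_powersetCard_sum_s6 {M : Type*} [AddCommMonoid M] (A : Finset α) {m : ℕ}
    (hm : 1 ≤ m) (f : α → M) :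
    ∑ Y ∈ A.powersetCard m, ∑ n ∈ Y, f n = (#A - 1).choose (m - 1) • ∑ n ∈ A, f n := by
  rw [sum_comm' (t' := A) (s' := fun n ↦ {Y ∈ A.powersetCard m | n ∈ Y})
    (fun Y n ↦ ⟨fun ⟨hY, hn⟩ ↦ ⟨mem_filter.2 ⟨hY, hn⟩, (mem_powersetCard.1 hY).1 hn⟩,
      fun ⟨hY, _⟩ ↦ mem_filter.1 hY⟩), smul_sum]
  refine sum_congr rfl fun n hn ↦ ?_
  have hcount : #{Y ∈ A.powersetCard m | n ∈ Y} = (#A - 1).choose (m - 1) := by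
    simpa using card_filter_powersetCard_subset {n} A m (singleton_subset_iff.2 hn) hm
  rw [sum_const, hcount]

theorem card_mul_le_mul_sum_of_le_sum_powersetCard_s6 {𝕜 : Type*} [CommRing 𝕜] [LinearOrder 𝕜]
    [IsStrictOrderedRing 𝕜] {A : Finset α} {m : ℕ} (hm : 1 ≤ m) (hmA : m ≤ #A) {f : α → 𝕜}
    {b : 𝕜} (h : ∀ Y ∈ A.powersetCard m, b ≤ ∑ n ∈ Y, f n) :
    #A * b ≤ m * ∑ n ∈ A, f n := by
  set k := (#A - 1).choose (m - 1)
  have hP : (0 : 𝕜) < #(A.powersetCard m) := by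
    rw [card_powersetCard]; exact_mod_cast Nat.choose_pos hmA
  have hsum : #(A.powersetCard m) * b ≤ k * ∑ n ∈ A, f n := by
    simpa [nsmul_eq_mul, sum_powersetCard_sum_s6 A hm f] using card_nsmul_le_sum _ _ _ h
  have hk : (#A : 𝕜) * k = #(A.powersetCard m) * m := by
    have := Nat.add_one_mul_choose_eq (#A - 1) (m - 1)
    rw [Nat.sub_add_cancel (by omega), Nat.sub_add_cancel hm] at this
    rw [card_powersetCard]; exact_mod_cast this
  refine le_of_mul_le_mul_left ?_ hP
  calc _ = #A * (#(A.powersetCard m) * b) := by ring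
    _ ≤ #A * (k * ∑ n ∈ A, f n) := by gcongr
    _ = _ := by rw [← mul_assoc, hk]; ring

end Finset

theorem card_div_sub_le_sum_union_of_powersetCard {α : Type*} [DecidableEq α] {A C : Finset α}
    (hCA : Disjoint C A) {m : ℕ} (hm : 1 ≤ m) (hmA : m ≤ #A) {K : ℝ} {u : α → ℝ}
    (hcap : ∀ n ∈ C, u n ≤ 1 / K) (h : ∀ Y ∈ A.powersetCard m, 1 ≤ ∑ n ∈ C ∪ Y, u n) :
    #A / m - #C * (#A - m) / (K * m) ≤ ∑ n ∈ C ∪ A, u n := by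
  set c := ∑ n ∈ C, u n
  set s := ∑ n ∈ A, u n
  have hcK : c ≤ #C / K :=
    calc c ≤ ∑ n ∈ C, 1 / K := sum_le_sum hcap
      _ = #C / K := by rw [sum_const, nsmul_eq_mul, mul_one_div]
  have havg : #A * (1 - c) ≤ m * s := by
    refine card_mul_le_mul_sum_of_le_sum_powersetCard_s6 hm hmA fun Y hY ↦ ?_
    have hYA := (mem_powersetCard.1 hY).1
    linarith [sum_union (f := u) (hCA.mono_right hYA) ▸ h Y hY]
  have hm0 : (0 : ℝ) < m := by exact_mod_cast hm
  have hmA' : (m : ℝ) ≤ #A := by exact_mod_cast hmA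
  rw [sum_union hCA, show (#C : ℝ) * (#A - m) / (K * m) = #C / K * (#A - m) / m by ring,
    ← sub_div, div_le_iff₀ hm0]
  nlinarith [mul_le_mul_of_nonneg_right hcK (sub_nonneg.2 hmA')]

theorem card_Icc_sdiff_add_card_inter (a b : ℕ) (D : Finset ℕ) :
    #(Icc a b \ D) + #(D ∩ Icc a b) = b + 1 - a := by
  rw [inter_comm, card_sdiff_add_card_inter, Nat.card_Icc]

theorem stmt_6_general (N R_r S K_c X_t : ℕ)
    (𝒟 : Finset ℕ)
    (D₁ D₂ : Finset ℕ)
    (hD₁ : D₁ = 𝒟 ∩ Finset.Icc (S + 1) N) (hD₂ : D₂ = 𝒟 ∩ Finset.Icc 1 S)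
    (h1 : 1 ≤ (R_r : ℤ) - (S : ℤ) - (D₁.card : ℤ) - (X_t : ℤ))
    (h2 : (R_r : ℤ) - (S : ℤ) - (D₁.card : ℤ) - (X_t : ℤ) ≤
      (N : ℤ) - (S : ℤ) - (D₁.card : ℤ))
    (u : ℕ → ℝ)
    (hcap : ∀ n ∈ Finset.Icc 1 S \ 𝒟, u n ≤ 1 / (K_c : ℝ))
    (h : ∀ Y ⊆ Finset.Icc (S + 1) N \ 𝒟,
      (Y.card : ℤ) = (R_r : ℤ) - (S : ℤ) - (D₁.card : ℤ) - (X_t : ℤ) →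
      1 ≤ ∑ n ∈ (Finset.Icc 1 S \ 𝒟) ∪ Y, u n) :
    ((N : ℝ) - S - D₁.card) / ((R_r : ℝ) - S - D₁.card - X_t) -
        ((S : ℝ) - D₂.card) * ((N : ℝ) - R_r + X_t) /
          ((K_c : ℝ) * ((R_r : ℝ) - S - D₁.card - X_t)) ≤
      ∑ n ∈ Finset.Icc 1 N \ 𝒟, u n := by
  classical
  subst hD₁ hD₂
  have hAD := card_Icc_sdiff_add_card_inter (S + 1) N 𝒟
  have hCD := card_Icc_sdiff_add_card_inter 1 S 𝒟
  set A := Icc (S + 1) N \ 𝒟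
  set C := Icc 1 S \ 𝒟
  set m := R_r - (S + #(𝒟 ∩ Icc (S + 1) N) + X_t)
  have hmR : (m : ℝ) = R_r - S - #(𝒟 ∩ Icc (S + 1) N) - X_t := by
    have : (m : ℤ) = R_r - S - #(𝒟 ∩ Icc (S + 1) N) - X_t := by omega
    exact_mod_cast this
  have hAR : (#A : ℝ) = N - S - #(𝒟 ∩ Icc (S + 1) N) := by
    have : (#A : ℤ) = N - S - #(𝒟 ∩ Icc (S + 1) N) := by omega
    exact_mod_cast this
  have hCR : (#C : ℝ) = S - #(𝒟 ∩ Icc 1 S) := by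
    have : (#C : ℤ) = S - #(𝒟 ∩ Icc 1 S) := by omega
    exact_mod_cast this
  have hCA : Disjoint C A := disjoint_left.2 fun n hC hA ↦ by
    simp only [C, A, mem_sdiff, mem_Icc] at hC hA; omega
  have hsplit : Icc 1 N \ 𝒟 = C ∪ A := by
    rw [← union_sdiff_distrib]
    congr 1
    ext n; simp only [mem_union, mem_Icc]; omega
  rw [hsplit, ← hmR, ← hAR, ← hCR, show (N : ℝ) - R_r + X_t = #A - m by rw [hAR, hmR]; ring]
  exact card_div_sub_le_sum_union_of_powersetCard hCA (by omega) (by omega) hcap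
    fun Y hY ↦ h Y (mem_powersetCard.1 hY).1 (by rw [(mem_powersetCard.1 hY).2]; omega)

/-- Upload-cost converse for the partially storage constrained setting
(`S < K_c`):
`C_u ≥ (N - S - |D₁|)/(R_r - S - |D₁| - X_t) - (S - |D₂|)(N - R_r + X_t)/(K_c (R_r - S - |D₁| - X_t))`. -/
theorem stmt_6 (N R_r S K_c X_t : ℕ) (hSK : S < K_c) (hK : 1 ≤ K_c)
    (𝒟 : Finset ℕ) (h𝒟 : 𝒟 ⊆ Finset.Icc 1 N)
    (D₁ D₂ : Finset ℕ)
    (hD₁ : D₁ = 𝒟 ∩ Finset.Icc (S + 1) N) (hD₂ : D₂ = 𝒟 ∩ Finset.Icc 1 S)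
    (h1 : 1 ≤ (R_r : ℤ) - (S : ℤ) - (D₁.card : ℤ) - (X_t : ℤ))
    (h2 : (R_r : ℤ) - (S : ℤ) - (D₁.card : ℤ) - (X_t : ℤ) ≤
      (N : ℤ) - (S : ℤ) - (D₁.card : ℤ))
    (u : ℕ → ℝ) (hu : ∀ n ∈ Finset.Icc 1 N, 0 ≤ u n)
    (hcap : ∀ n ∈ Finset.Icc 1 S \ 𝒟, u n ≤ 1 / (K_c : ℝ))
    (h : ∀ Y ⊆ Finset.Icc (S + 1) N \ 𝒟,
      (Y.card : ℤ) = (R_r : ℤ) - (S : ℤ) - (D₁.card : ℤ) - (X_t : ℤ) →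
      1 ≤ ∑ n ∈ (Finset.Icc 1 S \ 𝒟) ∪ Y, u n) :
    ((N : ℝ) - S - D₁.card) / ((R_r : ℝ) - S - D₁.card - X_t) -
        ((S : ℝ) - D₂.card) * ((N : ℝ) - R_r + X_t) /
          ((K_c : ℝ) * ((R_r : ℝ) - S - D₁.card - X_t)) ≤
      ∑ n ∈ Finset.Icc 1 N \ 𝒟, u n :=
  stmt_6_general N R_r S K_c X_t 𝒟 D₁ D₂ hD₁ hD₂ h1 h2 u hcap h
end

section
/- Let N, R_r, S, K_c, X_t be natural numbers with S < K_c, 1 ≤ K_c, R_r ≤ N, and |𝒟| + X_t ≤ R_r − K_c for a set 𝒟 ⊆ {1,…,N}. Consider the set of vectors u : {1,…,N} → ℝ that are nonnegative, satisfy u(n) ≤ 1/K_c for all n ∈ {1,…,S}∖𝒟, and satisfy ∑_{n ∈ R∖X} u(n) ≥ 1 for every R ⊆ {1,…,N}∖𝒟 with |R| = R_r − |𝒟| and every X ⊆ R with |X| = X_t. Then the minimum over this set of ∑_{n ∈ {1,…,N}∖𝒟} u(n) exists and equals (N − |𝒟|)/(R_r − |𝒟| − X_t); in particular, the constant vector with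 u(n) = 1/(R_r − |𝒟| − X_t) for all n ∈ {1,…,N}∖𝒟 (and 0 elsewhere) is feasible and attains this value. -/
/-- Feasibility predicate of the upload-cost linear program of Theorem 1. -/
def UploadFeasible (N R_r S K_c X_t : ℕ) (𝒟 : Finset ℕ) (u : ℕ → ℝ) : Prop :=
  (∀ n ∈ Finset.Icc 1 N, 0 ≤ u n) ∧
  (∀ n ∈ Finset.Icc 1 S \ 𝒟, u n ≤ 1 / (K_c : ℝ)) ∧
  (∀ R ⊆ Finset.Icc 1 N \ 𝒟, R.card = R_r - 𝒟.card →
    ∀ X ⊆ R, X.card = X_t → 1 ≤ ∑ n ∈ R \ X, u n)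

/-- Averaging lemma: if every `m`-subset of `s` has `u`-sum at least `1` and `u` is
nonnegative on `s`, then the total sum is at least `card s / m`. -/
lemma key_lb (u : ℕ → ℝ) (m : ℕ) (hm : 0 < m) :
    ∀ s : Finset ℕ, m ≤ s.card → (∀ n ∈ s, 0 ≤ u n) →
    (∀ T ⊆ s, T.card = m → 1 ≤ ∑ n ∈ T, u n) →
    (s.card : ℝ) / m ≤ ∑ n ∈ s, u n := by
  intro s
  induction s using Finset.strongInduction with
  | _ s IH =>
    intro hcard hpos hT
    have hm' : (0:ℝ) < (m:ℝ) := by positivity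
    rcases eq_or_lt_of_le hcard with heq | hlt
    · have h1 := hT s (subset_refl s) heq.symm
      rw [← heq, div_self (ne_of_gt hm')]
      exact h1
    · have hne : s.Nonempty := Finset.card_pos.mp (lt_of_lt_of_le hm hcard)
      obtain ⟨b, hb, hmax⟩ := Finset.exists_max_image s u hne
      obtain ⟨T, hbT, hTs, hTcard⟩ :=
        Finset.exists_subsuperset_card_eq (Finset.singleton_subset_iff.mpr hb)
          (by rw [Finset.card_singleton]; exact hm) hcard
      have h1T := hT T hTs hTcard
      have hub : 1 ≤ (m:ℝ) * u b := by
        calc (1:ℝ) ≤ ∑ n ∈ T, u n := h1T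
        _ ≤ ∑ _n ∈ T, u b := Finset.sum_le_sum (fun i hi => hmax i (hTs hi))
        _ = (m:ℝ) * u b := by rw [Finset.sum_const, hTcard, nsmul_eq_mul]
      have hcard1 : 1 ≤ s.card := le_trans hm hcard
      have hIH := IH (s.erase b) (Finset.erase_ssubset hb)
        (by rw [Finset.card_erase_of_mem hb]; omega)
        (fun n hn => hpos n (Finset.mem_of_mem_erase hn))
        (fun T hTsub hc => hT T (hTsub.trans (Finset.erase_subset _ _)) hc)
      have hsum : ∑ n ∈ s, u n = u b + ∑ n ∈ s.erase b, u n :=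
        (Finset.add_sum_erase s u hb).symm
      have hcb : ((s.erase b).card : ℝ) = (s.card : ℝ) - 1 := by
        rw [Finset.card_erase_of_mem hb, Nat.cast_sub hcard1, Nat.cast_one]
      rw [hcb] at hIH
      have hub' : 1/(m:ℝ) ≤ u b := by
        rw [div_le_iff₀ hm']; linarith
      have hsplit : (s.card:ℝ)/m = 1/m + ((s.card:ℝ)-1)/m := by ring
      rw [hsum, hsplit]
      linarith

/-- In the regime `|𝒟| + X_t ≤ R_r - K_c`, the minimum of the upload-cost linear
program exists and equals `(N - |𝒟|)/(R_r - |𝒟| - X_t)`; moreover the constant vector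
`u(n) = 1/(R_r - |𝒟| - X_t)` on `{1,…,N} ∖ 𝒟` (and `0` elsewhere) is feasible and
attains this value. -/
theorem stmt_8 (N R_r S K_c X_t : ℕ) (hSK : S < K_c) (hK : 1 ≤ K_c) (hRN : R_r ≤ N)
    (𝒟 : Finset ℕ) (h𝒟 : 𝒟 ⊆ Finset.Icc 1 N)
    (hcard : (𝒟.card : ℤ) + (X_t : ℤ) ≤ (R_r : ℤ) - (K_c : ℤ)) :
    IsLeast
      { s : ℝ | ∃ u : ℕ → ℝ, UploadFeasible N R_r S K_c X_t 𝒟 u ∧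
          s = ∑ n ∈ Finset.Icc 1 N \ 𝒟, u n }
      (((N : ℝ) - 𝒟.card) / ((R_r : ℝ) - 𝒟.card - X_t)) ∧
    UploadFeasible N R_r S K_c X_t 𝒟
      (fun n => if n ∈ Finset.Icc 1 N \ 𝒟 then
        1 / ((R_r : ℝ) - 𝒟.card - X_t) else 0) ∧
    ∑ n ∈ Finset.Icc 1 N \ 𝒟,
        (if n ∈ Finset.Icc 1 N \ 𝒟 then
          1 / ((R_r : ℝ) - 𝒟.card - X_t) else 0) =
      ((N : ℝ) - 𝒟.card) / ((R_r : ℝ) - 𝒟.card - X_t) := by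
  set D := 𝒟.card with hD
  set A := Finset.Icc 1 N \ 𝒟 with hA
  have hDX : D + X_t + K_c ≤ R_r := by omega
  set m := R_r - D - X_t with hm
  have hm1 : K_c ≤ m := by omega
  have hm0 : 0 < m := by omega
  have hRrm : R_r = m + D + X_t := by omega
  have hmR : (m:ℝ) = (R_r:ℝ) - D - X_t := by rw [hRrm]; push_cast; ring
  have hDN : D ≤ N := by
    have := Finset.card_le_card h𝒟
    simpa using this
  have hAcard : A.card = N - D := by
    rw [hA, Finset.card_sdiff_of_subset h𝒟]
    rw [← hD]
    simp [Nat.card_Icc]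
  have hAcardR : (A.card : ℝ) = (N:ℝ) - D := by
    rw [hAcard, Nat.cast_sub hDN]
  have hmpos : (0:ℝ) < (R_r:ℝ) - D - X_t := by
    rw [← hmR]; positivity
  have hKpos : (0:ℝ) < (K_c:ℝ) := by positivity
  -- feasibility of the constant vector
  have hfeas : UploadFeasible N R_r S K_c X_t 𝒟
      (fun n => if n ∈ A then 1 / ((R_r : ℝ) - D - X_t) else 0) := by
    refine ⟨?_, ?_, ?_⟩
    · intro n _
      dsimp only
      split_ifs
      · positivity
      · exact le_refl 0
    · intro n _
      dsimp only
      split_ifs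
      · apply one_div_le_one_div_of_le hKpos
        rw [← hmR]
        exact_mod_cast hm1
      · positivity
    · intro R hRA hRcard X hXR hXcard
      have hRXcard : (R \ X).card = m := by
        rw [Finset.card_sdiff_of_subset hXR, hRcard, hXcard]
      have : ∑ n ∈ R \ X, (fun n => if n ∈ A then 1 / ((R_r : ℝ) - D - X_t) else 0) n
          = ∑ _n ∈ R \ X, 1 / ((R_r : ℝ) - D - X_t) := by
        refine Finset.sum_congr rfl fun n hn => ?_
        have hnA : n ∈ A := hRA (Finset.sdiff_subset hn)
        simp [hnA]
      rw [this, Finset.sum_const, hRXcard, nsmul_eq_mul, ← hmR, mul_one_div,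
        div_self (by positivity : ((m:ℕ):ℝ) ≠ 0)]
  -- value of the constant vector
  have hval : ∑ n ∈ A, (if n ∈ A then 1 / ((R_r : ℝ) - D - X_t) else 0)
      = ((N : ℝ) - D) / ((R_r : ℝ) - D - X_t) := by
    have : ∑ n ∈ A, (if n ∈ A then 1 / ((R_r : ℝ) - D - X_t) else 0)
        = ∑ _n ∈ A, 1 / ((R_r : ℝ) - D - X_t) :=
      Finset.sum_congr rfl fun n hn => by simp [hn]
    rw [this, Finset.sum_const, nsmul_eq_mul, hAcardR, mul_one_div]
  refine ⟨⟨⟨_, hfeas, hval.symm⟩, ?_⟩, hfeas, hval⟩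
  rintro s ⟨u, hu, rfl⟩
  have hnonneg : ∀ n ∈ A, 0 ≤ u n := fun n hn =>
    hu.1 n (Finset.mem_sdiff.mp hn).1
  have hmA : m ≤ A.card := by rw [hAcard]; omega
  have hTcon : ∀ T ⊆ A, T.card = m → 1 ≤ ∑ n ∈ T, u n := by
    intro T hTA hTm
    obtain ⟨R, hTR, hRA, hRcard⟩ := Finset.exists_subsuperset_card_eq
      (n := R_r - 𝒟.card) hTA (by omega) (by rw [hAcard]; omega)
    have hXcard : (R \ T).card = X_t := by
      rw [Finset.card_sdiff_of_subset hTR, hRcard, hTm]; omega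
    have hRX : R \ (R \ T) = T := Finset.sdiff_sdiff_eq_self hTR
    have := hu.2.2 R hRA hRcard (R \ T) Finset.sdiff_subset hXcard
    rwa [hRX] at this
  have := key_lb u m hm0 A hmA hnonneg hTcon
  rw [hAcardR, hmR] at this
  exact this
end

section
/- Let N, R_r, S, K_c be positive integers with S < K_c and S + 1 ≤ R_r, let 𝒟 ⊆ {1,…,N} with |𝒟| > N − (R_r − S − 1) − K_c, and set D₁ = 𝒟 ∩ {S+1,…,N}, D₂ = 𝒟 ∩ {1,…,S}; assume N − |D₁| − R_r + 1 ≥ 1. Define d : {1,…,N} → ℝ by d(n) = 1/K_c for n ∈ {1,…,S}∖𝒟, d(n) = (K_c − S + |D₂|)/(K_c (N − |D₁| − R_r + 1)) for n ∈ {S+1,…,N}∖𝒟, and d(n) = 0 for n ∈ 𝒟. Then d is nonnegative, satisfies d(n) ≤ 1/K_c on {1,…,S}∖𝒟, satisfies ∑_{n ∈ ({1,…,N}∖𝒟)∖X} d(n) ≥ 1 for every X ⊆ {1,…,N}∖𝒟 with |X| = R_r − S − 1, and ∑_{n ∈ {1,…,N}∖𝒟} d(n) = (N − S − |D₁|)/(N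 − |D₁| − R_r + 1) − (S − |D₂|)(R_r − S − 1)/(K_c (N − |D₁| − R_r + 1)). -/
/-!
On the available servers `d` takes the value `1/K_c` (on the `S - |D₂|` constrained ones) and
`v = (K_c - S + |D₂|)/(K_c M)`, `M = N - |D₁| - R_r + 1` (on the `N - S - |D₁|` others). The regime
`|𝒟| > N - (R_r - S - 1) - K_c` says `M < K_c - S + |D₂|`, i.e. `1/K_c < v`, so `v` is the largest
entry and removing `R_r - S - 1` servers costs at most `(R_r - S - 1) v`. What is left is at least
`(S - |D₂|)/K_c + M v = (S - |D₂|)/K_c + (K_c - S + |D₂|)/K_c = 1`.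
-/

open Finset

theorem sub_card_nsmul_le_sum_sdiff {ι M : Type*} [DecidableEq ι] [AddCommGroup M] [PartialOrder M]
    [IsOrderedAddMonoid M] {s t : Finset ι} {f : ι → M} {v : M} (hts : t ⊆ s)
    (hf : ∀ i ∈ s, f i ≤ v) :
    ∑ i ∈ s, f i - #t • v ≤ ∑ i ∈ s \ t, f i := by
  rw [sum_sdiff_eq_sub hts]
  exact sub_le_sub_left (sum_le_card_nsmul t f v fun i hi => hf i (hts hi)) _

namespace Nat

theorem cast_card_Icc_sdiff {R : Type*} [AddCommGroupWithOne R] {a b : ℕ} (hab : a ≤ b + 1)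
    (D : Finset ℕ) : (#(Icc a b \ D) : R) = b + 1 - a - #(D ∩ Icc a b) := by
  have hcard : #(Icc a b \ D) + #(D ∩ Icc a b) + a = b + 1 := by
    rw [inter_comm, card_sdiff_add_card_inter, Nat.card_Icc]
    omega
  rw [eq_sub_iff_add_eq, eq_sub_iff_add_eq]
  simpa using congrArg (Nat.cast : ℕ → R) hcard

theorem card_eq_card_inter_Icc_add_card_inter_Icc {D : Finset ℕ} {N : ℕ} (hD : D ⊆ Icc 1 N)
    (S : ℕ) : #D = #(D ∩ Icc (S + 1) N) + #(D ∩ Icc 1 S) := by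
  have hcompl : D \ Icc 1 S = D ∩ Icc (S + 1) N := by
    ext n
    simp only [mem_sdiff, mem_inter, mem_Icc]
    constructor
    · rintro ⟨hn, hnS⟩
      have := mem_Icc.1 (hD hn)
      exact ⟨hn, by omega, this.2⟩
    · rintro ⟨hn, hSn, -⟩
      exact ⟨hn, by omega⟩
  rw [← hcompl, card_sdiff_add_card_inter]

theorem mem_Icc_sdiff_or {n N : ℕ} {D : Finset ℕ} (hn : n ∈ Icc 1 N \ D) (S : ℕ) :
    n ∈ Icc 1 S \ D ∨ n ∈ Icc (S + 1) N \ D := by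
  obtain ⟨hnN, hnD⟩ := mem_sdiff.1 hn
  rw [mem_Icc] at hnN
  by_cases hnS : n ≤ S
  · exact .inl (mem_sdiff.2 ⟨mem_Icc.2 ⟨hnN.1, hnS⟩, hnD⟩)
  · exact .inr (mem_sdiff.2 ⟨mem_Icc.2 ⟨by omega, hnN.2⟩, hnD⟩)

theorem sum_Icc_sdiff_split {M : Type*} [AddCommMonoid M] (f : ℕ → M) (D : Finset ℕ)
    {S N : ℕ} (hSN : S ≤ N) :
    ∑ n ∈ Icc 1 N \ D, f n = ∑ n ∈ Icc 1 S \ D, f n + ∑ n ∈ Icc (S + 1) N \ D, f n := by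
  have hIcc : Icc 1 N = Icc 1 S ∪ Icc (S + 1) N := by
    ext n
    simp only [mem_union, mem_Icc]
    omega
  have hdisj : Disjoint (Icc 1 S) (Icc (S + 1) N) := by
    rw [disjoint_left]
    intro n h1 h2
    rw [mem_Icc] at h1 h2
    omega
  rw [hIcc, union_sdiff_distrib, sum_union (hdisj.mono sdiff_subset sdiff_subset)]

theorem sum_Icc_sdiff_of_eq_const_of_eq_const {R : Type*} [Semiring R] {f : ℕ → R}
    {D : Finset ℕ} {S N : ℕ} {a b : R} (hSN : S ≤ N) (ha : ∀ n ∈ Icc 1 S \ D, f n = a)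
    (hb : ∀ n ∈ Icc (S + 1) N \ D, f n = b) :
    ∑ n ∈ Icc 1 N \ D, f n = #(Icc 1 S \ D) * a + #(Icc (S + 1) N \ D) * b := by
  rw [sum_Icc_sdiff_split f D hSN, sum_congr rfl ha, sum_congr rfl hb, sum_const, sum_const,
    nsmul_eq_mul, nsmul_eq_mul]

theorem le_and_le_of_eq_const_of_eq_const {R : Type*} [Preorder R] {f : ℕ → R}
    {D : Finset ℕ} {S N : ℕ} {a b : R} (hab : a ≤ b) (ha : ∀ n ∈ Icc 1 S \ D, f n = a)
    (hb : ∀ n ∈ Icc (S + 1) N \ D, f n = b) : ∀ n ∈ Icc 1 N \ D, a ≤ f n ∧ f n ≤ b := by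
  intro n hn
  rcases mem_Icc_sdiff_or hn S with hn | hn
  · rw [ha n hn]; exact ⟨le_rfl, hab⟩
  · rw [hb n hn]; exact ⟨hab, le_rfl⟩

end Nat

theorem stmt_9_general (N R_r S K_c : ℕ)
    (hSK : S < K_c) (hSR : S + 1 ≤ R_r)
    (𝒟 : Finset ℕ) (h𝒟 : 𝒟 ⊆ Finset.Icc 1 N)
    (D₁ D₂ : Finset ℕ)
    (hD₁ : D₁ = 𝒟 ∩ Finset.Icc (S + 1) N) (hD₂ : D₂ = 𝒟 ∩ Finset.Icc 1 S)
    (hbig : (N : ℤ) - ((R_r : ℤ) - (S : ℤ) - 1) - (K_c : ℤ) < (𝒟.card : ℤ))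
    (hcard : D₁.card + R_r ≤ N)
    (d : ℕ → ℝ)
    (hd1 : ∀ n ∈ Finset.Icc 1 S \ 𝒟, d n = 1 / (K_c : ℝ))
    (hd2 : ∀ n ∈ Finset.Icc (S + 1) N \ 𝒟,
      d n = ((K_c : ℝ) - S + D₂.card) / ((K_c : ℝ) * ((N : ℝ) - D₁.card - R_r + 1)))
    (hd3 : ∀ n ∈ 𝒟, d n = 0) :
    (∀ n ∈ Finset.Icc 1 N, 0 ≤ d n) ∧
    (∀ n ∈ Finset.Icc 1 S \ 𝒟, d n ≤ 1 / (K_c : ℝ)) ∧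
    (∀ X ⊆ Finset.Icc 1 N \ 𝒟, X.card = R_r - S - 1 →
      1 ≤ ∑ n ∈ (Finset.Icc 1 N \ 𝒟) \ X, d n) ∧
    ∑ n ∈ Finset.Icc 1 N \ 𝒟, d n =
      ((N : ℝ) - S - D₁.card) / ((N : ℝ) - D₁.card - R_r + 1) -
        ((S : ℝ) - D₂.card) * ((R_r : ℝ) - S - 1) /
          ((K_c : ℝ) * ((N : ℝ) - D₁.card - R_r + 1)) := by
  have hSN : S ≤ N := by omega
  set M : ℝ := (N : ℝ) - D₁.card - R_r + 1
  set v : ℝ := ((K_c : ℝ) - S + D₂.card) / ((K_c : ℝ) * M) with hv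
  have hA₁ : (#(Icc 1 S \ 𝒟) : ℝ) = S - #D₂ := by
    rw [Nat.cast_card_Icc_sdiff (by omega), ← hD₂]; push_cast; ring
  have hA₂ : (#(Icc (S + 1) N \ 𝒟) : ℝ) = N - S - #D₁ := by
    rw [Nat.cast_card_Icc_sdiff (by omega), ← hD₁]; push_cast; ring
  have hK : (0 : ℝ) < K_c := by exact_mod_cast (Nat.zero_le S).trans_lt hSK
  have hMpos : 0 < M := by
    linarith [(by exact_mod_cast hcard : (#D₁ : ℝ) + R_r ≤ N)]
  have hv_ge : 1 / (K_c : ℝ) ≤ v := by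
    rw [Nat.card_eq_card_inter_Icc_add_card_inter_Icc h𝒟 S, ← hD₁, ← hD₂] at hbig
    rw [hv, div_le_div_iff₀ hK (by positivity)]
    nlinarith [(by exact_mod_cast hbig : (N : ℝ) - (R_r - S - 1) - K_c < #D₁ + #D₂)]
  have hbounds := Nat.le_and_le_of_eq_const_of_eq_const hv_ge hd1 hd2
  have htotal : ∑ n ∈ Icc 1 N \ 𝒟, d n = (S - #D₂) * (1 / K_c) + (N - S - #D₁) * v := by
    rw [Nat.sum_Icc_sdiff_of_eq_const_of_eq_const hSN hd1 hd2, hA₁, hA₂]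
  refine ⟨fun n hn => ?_, fun n hn => (hd1 n hn).le, fun X hX hXcard => ?_, ?_⟩
  · by_cases hn𝒟 : n ∈ 𝒟
    · exact (hd3 n hn𝒟).ge
    · exact (by positivity : (0 : ℝ) ≤ 1 / K_c).trans (hbounds n (mem_sdiff.2 ⟨hn, hn𝒟⟩)).1
  · have hX' : (#X : ℝ) = R_r - S - 1 := by
      have : #X + S + 1 = R_r := by omega
      rw [← this]; push_cast; ring
    calc (1 : ℝ) = ∑ n ∈ Icc 1 N \ 𝒟, d n - #X • v := by
          rw [htotal, nsmul_eq_mul, hX', hv]; field_simp; ring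
      _ ≤ _ := sub_card_nsmul_le_sum_sdiff hX fun n hn => (hbounds n hn).2
  · rw [htotal, hv]
    field_simp
    ring

/-- In the regime `|𝒟| > N - (R_r - S - 1) - K_c`, the explicitly defined vector
(`1/K_c` on available constrained servers, `(K_c - S + |D₂|)/(K_c (N - |D₁| - R_r + 1))`
on available unconstrained servers, `0` on dropout servers) is feasible for the
download-cost linear program and attains the converse lower bound. -/
theorem stmt_9 (N R_r S K_c : ℕ) (hN : 0 < N) (hR : 0 < R_r) (hS : 0 < S) (hK : 0 < K_c)
    (hSK : S < K_c) (hSR : S + 1 ≤ R_r)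
    (𝒟 : Finset ℕ) (h𝒟 : 𝒟 ⊆ Finset.Icc 1 N)
    (D₁ D₂ : Finset ℕ)
    (hD₁ : D₁ = 𝒟 ∩ Finset.Icc (S + 1) N) (hD₂ : D₂ = 𝒟 ∩ Finset.Icc 1 S)
    (hbig : (N : ℤ) - ((R_r : ℤ) - (S : ℤ) - 1) - (K_c : ℤ) < (𝒟.card : ℤ))
    (hcard : D₁.card + R_r ≤ N)
    (d : ℕ → ℝ)
    (hd1 : ∀ n ∈ Finset.Icc 1 S \ 𝒟, d n = 1 / (K_c : ℝ))
    (hd2 : ∀ n ∈ Finset.Icc (S + 1) N \ 𝒟,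
      d n = ((K_c : ℝ) - S + D₂.card) / ((K_c : ℝ) * ((N : ℝ) - D₁.card - R_r + 1)))
    (hd3 : ∀ n ∈ 𝒟, d n = 0) :
    (∀ n ∈ Finset.Icc 1 N, 0 ≤ d n) ∧
    (∀ n ∈ Finset.Icc 1 S \ 𝒟, d n ≤ 1 / (K_c : ℝ)) ∧
    (∀ X ⊆ Finset.Icc 1 N \ 𝒟, X.card = R_r - S - 1 →
      1 ≤ ∑ n ∈ (Finset.Icc 1 N \ 𝒟) \ X, d n) ∧
    ∑ n ∈ Finset.Icc 1 N \ 𝒟, d n =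
      ((N : ℝ) - S - D₁.card) / ((N : ℝ) - D₁.card - R_r + 1) -
        ((S : ℝ) - D₂.card) * ((R_r : ℝ) - S - 1) /
          ((K_c : ℝ) * ((N : ℝ) - D₁.card - R_r + 1)) :=
  stmt_9_general N R_r S K_c hSK hSR 𝒟 h𝒟 D₁ D₂ hD₁ hD₂ hbig hcard d hd1 hd2 hd3
end

section
/- Let N, R_r, S, K_c, X_t be natural numbers with S < K_c, 1 ≤ K_c, R_r ≤ N, and |𝒟| + X_t > R_r − K_c for a set 𝒟 ⊆ {1,…,N}; set D₁ = 𝒟 ∩ {S+1,…,N}, D₂ = 𝒟 ∩ {1,…,S}, and assume R_r − S − |D₁| − X_t ≥ 1. Define u : {1,…,N} → ℝ by u(n) = 1/K_c for n ∈ {1,…,S}∖𝒟, u(n) = (K_c − S + |D₂|)/(K_c (R_r − S − |D₁| − X_t)) for n ∈ {S+1,…,N}∖𝒟, and u(n) = 0 for n ∈ 𝒟. Then u is nonnegative, satisfies u(n) ≤ 1/K_c on {1,…,S}∖𝒟, satisfies ∑_{n ∈ R∖X} u(n) ≥ 1 for every R ⊆ {1,…,N}∖𝒟 with |R| = R_r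 − |𝒟| and every X ⊆ R with |X| = X_t, and ∑_{n ∈ {1,…,N}∖𝒟} u(n) = (N − S − |D₁|)/(R_r − S − |D₁| − X_t) − (S − |D₂|)(N − R_r + X_t)/(K_c (R_r − S − |D₁| − X_t)). -/
/-!
On the available servers `u` takes two values: `1/K_c` on the constrained ones (indices `≤ S`)
and `v = (K_c - S + |D₂|)/(K_c d)` on the others, where `d = R_r - S - |D₁| - X_t`. The regime
`|𝒟| + X_t > R_r - K_c` says exactly that `1/K_c ≤ v`, so among the sets `R \ X` of
`R_r - |𝒟| - X_t` available servers the lightest one contains all `S - |D₂|` available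
constrained servers and `d` unconstrained ones, of weight `(S - |D₂|)/K_c + d v = 1`.
-/

open Finset

namespace Finset

variable {α : Type*} (p : α → Prop) [DecidablePred p]

theorem sum_two_valued {M : Type*} [AddCommMonoid M] {s : Finset α} {f : α → M} {a b : M}
    (ha : ∀ x ∈ s, p x → f x = a) (hb : ∀ x ∈ s, ¬p x → f x = b) :
    ∑ x ∈ s, f x = #(s.filter p) • a + #(s.filter (¬p ·)) • b := by
  rw [← sum_filter_add_sum_filter_not s p,
    sum_congr rfl fun x hx => ha x (mem_filter.1 hx).1 (mem_filter.1 hx).2,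
    sum_congr rfl fun x hx => hb x (mem_filter.1 hx).1 (mem_filter.1 hx).2,
    sum_const, sum_const]

/-- The sum over `s ⊆ t` is smallest when `s` contains all of the cheap part of `t`. -/
theorem le_sum_of_subset_two_valued {K : Type*} [CommRing K] [LinearOrder K] [IsOrderedRing K]
    {s t : Finset α} (hst : s ⊆ t) {f : α → K} {a b : K} (hab : a ≤ b)
    (ha : ∀ x ∈ t, p x → f x = a) (hb : ∀ x ∈ t, ¬p x → f x = b) :
    #(t.filter p) * a + (#s - #(t.filter p)) * b ≤ ∑ x ∈ s, f x := by
  have hcard : (#(s.filter (¬p ·)) : K) = #s - #(s.filter p) := by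
    rw [← card_filter_add_card_filter_not (s := s) p]
    push_cast
    ring
  have hle : (#(s.filter p) : K) ≤ #(t.filter p) :=
    Nat.mono_cast (card_le_card (filter_subset_filter p hst))
  rw [sum_two_valued p (fun x hx => ha x (hst hx)) (fun x hx => hb x (hst hx)),
    nsmul_eq_mul, nsmul_eq_mul, hcard]
  linear_combination mul_nonneg (sub_nonneg.2 hle) (sub_nonneg.2 hab)

end Finset

theorem cast_card_Icc_sdiff {R : Type*} [AddGroupWithOne R] {a b : ℕ} (hab : a ≤ b + 1)
    (𝒟 : Finset ℕ) : (#(Icc a b \ 𝒟) : R) = b + 1 - a - #(𝒟 ∩ Icc a b) := by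
  rw [← sdiff_inter_self_right, cast_card_sdiff inter_subset_right, Nat.card_Icc,
    Nat.cast_sub hab, Nat.cast_add_one]

theorem card_eq_card_inter_Icc_add_card_inter_Icc {N : ℕ} {𝒟 : Finset ℕ}
    (h𝒟 : 𝒟 ⊆ Icc 1 N) (S : ℕ) :
    #𝒟 = #(𝒟 ∩ Icc 1 S) + #(𝒟 ∩ Icc (S + 1) N) := by
  have hsdiff : 𝒟 \ Icc 1 S = 𝒟 ∩ Icc (S + 1) N := by
    ext n
    simp only [mem_sdiff, mem_inter, mem_Icc]
    refine and_congr_right fun hn => ?_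
    have := mem_Icc.1 (h𝒟 hn)
    omega
  rw [← hsdiff, card_inter_add_card_sdiff]

theorem filter_le_Icc_sdiff {S N : ℕ} (hSN : S ≤ N) (𝒟 : Finset ℕ) :
    (Icc 1 N \ 𝒟).filter (· ≤ S) = Icc 1 S \ 𝒟 := by
  ext n
  simp only [mem_filter, mem_sdiff, mem_Icc]
  grind

theorem filter_not_le_Icc_sdiff (S N : ℕ) (𝒟 : Finset ℕ) :
    (Icc 1 N \ 𝒟).filter (¬· ≤ S) = Icc (S + 1) N \ 𝒟 := by
  ext n
  simp only [mem_filter, mem_sdiff, mem_Icc]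
  grind

theorem stmt_10_general (N R_r S K_c X_t : ℕ) (hK : 1 ≤ K_c) (hRN : R_r ≤ N)
    (𝒟 : Finset ℕ) (h𝒟 : 𝒟 ⊆ Finset.Icc 1 N)
    (D₁ D₂ : Finset ℕ)
    (hD₁ : D₁ = 𝒟 ∩ Finset.Icc (S + 1) N) (hD₂ : D₂ = 𝒟 ∩ Finset.Icc 1 S)
    (hbig : (R_r : ℤ) - (K_c : ℤ) < (𝒟.card : ℤ) + (X_t : ℤ))
    (h1 : 1 ≤ (R_r : ℤ) - (S : ℤ) - (D₁.card : ℤ) - (X_t : ℤ))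
    (u : ℕ → ℝ)
    (hu1 : ∀ n ∈ Finset.Icc 1 S \ 𝒟, u n = 1 / (K_c : ℝ))
    (hu2 : ∀ n ∈ Finset.Icc (S + 1) N \ 𝒟,
      u n = ((K_c : ℝ) - S + D₂.card) / ((K_c : ℝ) * ((R_r : ℝ) - S - D₁.card - X_t)))
    (hu3 : ∀ n ∈ 𝒟, u n = 0) :
    (∀ n ∈ Finset.Icc 1 N, 0 ≤ u n) ∧
    (∀ n ∈ Finset.Icc 1 S \ 𝒟, u n ≤ 1 / (K_c : ℝ)) ∧
    (∀ R ⊆ Finset.Icc 1 N \ 𝒟, R.card = R_r - 𝒟.card →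
      ∀ X ⊆ R, X.card = X_t → 1 ≤ ∑ n ∈ R \ X, u n) ∧
    ∑ n ∈ Finset.Icc 1 N \ 𝒟, u n =
      ((N : ℝ) - S - D₁.card) / ((R_r : ℝ) - S - D₁.card - X_t) -
        ((S : ℝ) - D₂.card) * ((N : ℝ) - R_r + X_t) /
          ((K_c : ℝ) * ((R_r : ℝ) - S - D₁.card - X_t)) := by
  have hSN : S ≤ N := by omega
  have hcard𝒟 : #𝒟 = #D₁ + #D₂ := by
    rw [hD₁, hD₂, add_comm]; exact card_eq_card_inter_Icc_add_card_inter_Icc h𝒟 S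
  have hK₀ : (0 : ℝ) < K_c := by exact_mod_cast hK
  have hd₀ : (1 : ℝ) ≤ R_r - S - #D₁ - X_t := by exact_mod_cast h1
  have hbig' : (R_r : ℝ) - K_c < #D₁ + #D₂ + X_t := by rw [hcard𝒟] at hbig; exact_mod_cast hbig
  set v : ℝ := ((K_c : ℝ) - S + #D₂) / (K_c * (R_r - S - #D₁ - X_t)) with hv
  have hvK : 1 / (K_c : ℝ) ≤ v := by
    rw [hv, div_le_div_iff₀ hK₀ (by positivity)]
    nlinarith
  have hlow : ∀ n ∈ Icc 1 N \ 𝒟, n ≤ S → u n = 1 / K_c := fun n hn hS =>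
    hu1 n (filter_le_Icc_sdiff hSN 𝒟 ▸ mem_filter.2 ⟨hn, hS⟩)
  have hhigh : ∀ n ∈ Icc 1 N \ 𝒟, ¬n ≤ S → u n = v := fun n hn hS =>
    hu2 n (filter_not_le_Icc_sdiff S N 𝒟 ▸ mem_filter.2 ⟨hn, hS⟩)
  refine ⟨fun n hn => ?_, fun n hn => (hu1 n hn).le, fun R hR hRcard X hX hXcard => ?_, ?_⟩
  · by_cases h : n ∈ 𝒟
    · exact (hu3 n h).ge
    · by_cases hS : n ≤ S
      · rw [hlow n (mem_sdiff.2 ⟨hn, h⟩) hS]; positivity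
      · rw [hhigh n (mem_sdiff.2 ⟨hn, h⟩) hS]; exact (one_div_pos.2 hK₀).le.trans hvK
  · have hD₂S : #D₂ ≤ S := hD₂ ▸ (card_le_card inter_subset_right).trans (Nat.card_Icc 1 S).le
    have hcardRX : (#(R \ X) : ℝ) = R_r - #D₁ - #D₂ - X_t := by
      rw [cast_card_sdiff hX, hRcard, hXcard, Nat.cast_sub (show #𝒟 ≤ R_r by omega), hcard𝒟]
      push_cast; ring
    refine Eq.trans_le ?_
      (le_sum_of_subset_two_valued (· ≤ S) (sdiff_subset.trans hR) hvK hlow hhigh)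
    rw [filter_le_Icc_sdiff hSN, cast_card_Icc_sdiff (by omega), ← hD₂, hcardRX, hv]
    field_simp
    ring
  · rw [sum_two_valued (· ≤ S) hlow hhigh, filter_le_Icc_sdiff hSN, filter_not_le_Icc_sdiff,
      nsmul_eq_mul, nsmul_eq_mul, cast_card_Icc_sdiff (by omega), cast_card_Icc_sdiff (by omega),
      ← hD₁, ← hD₂, hv]
    field_simp
    push_cast
    ring

/-- In the regime `|𝒟| + X_t > R_r - K_c`, the explicitly defined vector
(`1/K_c` on available constrained servers, `(K_c - S + |D₂|)/(K_c (R_r - S - |D₁| - X_t))`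
on available unconstrained servers, `0` on dropout servers) is feasible for the
upload-cost linear program and attains the converse lower bound. -/
theorem stmt_10 (N R_r S K_c X_t : ℕ) (hSK : S < K_c) (hK : 1 ≤ K_c) (hRN : R_r ≤ N)
    (𝒟 : Finset ℕ) (h𝒟 : 𝒟 ⊆ Finset.Icc 1 N)
    (D₁ D₂ : Finset ℕ)
    (hD₁ : D₁ = 𝒟 ∩ Finset.Icc (S + 1) N) (hD₂ : D₂ = 𝒟 ∩ Finset.Icc 1 S)
    (hbig : (R_r : ℤ) - (K_c : ℤ) < (𝒟.card : ℤ) + (X_t : ℤ))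
    (h1 : 1 ≤ (R_r : ℤ) - (S : ℤ) - (D₁.card : ℤ) - (X_t : ℤ))
    (u : ℕ → ℝ)
    (hu1 : ∀ n ∈ Finset.Icc 1 S \ 𝒟, u n = 1 / (K_c : ℝ))
    (hu2 : ∀ n ∈ Finset.Icc (S + 1) N \ 𝒟,
      u n = ((K_c : ℝ) - S + D₂.card) / ((K_c : ℝ) * ((R_r : ℝ) - S - D₁.card - X_t)))
    (hu3 : ∀ n ∈ 𝒟, u n = 0) :
    (∀ n ∈ Finset.Icc 1 N, 0 ≤ u n) ∧
    (∀ n ∈ Finset.Icc 1 S \ 𝒟, u n ≤ 1 / (K_c : ℝ)) ∧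
    (∀ R ⊆ Finset.Icc 1 N \ 𝒟, R.card = R_r - 𝒟.card →
      ∀ X ⊆ R, X.card = X_t → 1 ≤ ∑ n ∈ R \ X, u n) ∧
    ∑ n ∈ Finset.Icc 1 N \ 𝒟, u n =
      ((N : ℝ) - S - D₁.card) / ((R_r : ℝ) - S - D₁.card - X_t) -
        ((S : ℝ) - D₂.card) * ((N : ℝ) - R_r + X_t) /
          ((K_c : ℝ) * ((R_r : ℝ) - S - D₁.card - X_t)) :=
  stmt_10_general N R_r S K_c X_t hK hRN 𝒟 h𝒟 D₁ D₂ hD₁ hD₂ hbig h1 u hu1 hu2 hu3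
end

section
/- Let F be a field, let x₁,…,x_N ∈ F be pairwise distinct, let f₁,…,f_β ∈ F be pairwise distinct with x_i ≠ f_j for all i, j, and let C be the N × β matrix with C(i,j) = 1/(x_i − f_j). Let 𝒟 ⊆ {1,…,N} with |𝒟| = d, let J_H ⊆ {1,…,β} with |J_H| = d, and let γ be a positive integer. Then for every matrix M₀ : ({1,…,β} ∖ J_H) × {1,…,γ} → F there exists a unique matrix H : J_H × {1,…,γ} → F such that the β × γ matrix M obtained by filling the rows indexed by {1,…,β} ∖ J_H with M₀ and the rows indexed by J_H with H satisfies C(n,:) · M = 0 (the zero row vector of length γ) for every n ∈ 𝒟. -/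
/-!
If `∑ j, v j / (a - f j)` vanishes at `#ι ≥ #κ` distinct nodes `a = x i`, then the numerator of
this partial fraction, a polynomial of degree `< #κ`, has too many roots and is zero; evaluating
it at the pole `f j` gives `v j * ∏ k ≠ j, (f j - f k) = 0`, so `v = 0`. Hence the square Cauchy
matrix `C(𝒟, J_H)` is invertible, and column by column the rows of `M` indexed by `J_H` are the
unique solution of `C(𝒟, J_H) H = - C(𝒟, J_Hᶜ) M₀`.
-/

open Finset Matrix Polynomial

section Cauchy

variable {K ι κ : Type*} [Field K]

def cauchyMatrix (x : ι → K) (f : κ → K) : Matrix ι κ K :=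
  Matrix.of fun i j => (x i - f j)⁻¹

variable [Fintype ι] [Fintype κ] [DecidableEq κ] {x : ι → K} {f : κ → K}

theorem cauchyMatrix_mulVec_injective (hx : Function.Injective x) (hf : Function.Injective f)
    (hxf : ∀ i j, x i ≠ f j) (hcard : Fintype.card κ ≤ Fintype.card ι) :
    Function.Injective (cauchyMatrix x f).mulVec := by
  refine (injective_iff_map_eq_zero (cauchyMatrix x f).mulVecLin).2 fun v hvz => ?_
  have hv (i : ι) : ∑ j, (x i - f j)⁻¹ * v j = 0 := congrFun hvz i
  set r : κ → K := fun j => v j / Lagrange.nodalWeight univ f j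
  have hr (i : ι) : ∑ j, Lagrange.nodalWeight univ f j * (x i - f j)⁻¹ * r j = 0 := by
    rw [← hv i]
    refine sum_congr rfl fun j _ => ?_
    rw [mul_right_comm, mul_div_cancel₀ _ (Lagrange.nodalWeight_ne_zero hf.injOn (mem_univ j)),
      mul_comm]
  have hP : Lagrange.interpolate univ f r = 0 := by
    refine Polynomial.eq_zero_of_degree_lt_of_eval_index_eq_zero _ hx.injOn
      ((Lagrange.degree_interpolate_lt _ hf.injOn).trans_le (by exact_mod_cast hcard)) fun i _ => ?_
    rw [Lagrange.eval_interpolate_not_at_node _ fun j _ => hxf i j, hr i, mul_zero]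
  funext j
  have := Lagrange.eval_interpolate_at_node r hf.injOn (mem_univ j)
  rw [hP, eval_zero, eq_comm, div_eq_zero_iff] at this
  exact this.resolve_right (Lagrange.nodalWeight_ne_zero hf.injOn (mem_univ j))

theorem cauchyMatrix_mulVec_bijective (hx : Function.Injective x) (hf : Function.Injective f)
    (hxf : ∀ i j, x i ≠ f j) (hcard : Fintype.card κ = Fintype.card ι) :
    Function.Bijective (cauchyMatrix x f).mulVec := by
  have hinj := cauchyMatrix_mulVec_injective hx hf hxf hcard.le
  have hdim : Module.finrank K (κ → K) = Module.finrank K (ι → K) := by simpa using hcard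
  exact ⟨hinj, (LinearMap.injective_iff_surjective_of_finrank_eq_finrank
    (f := (cauchyMatrix x f).mulVecLin) hdim).1 hinj⟩

end Cauchy

section Extension

variable {K m ι κ : Type*} [Field K] [Fintype ι]

theorem Matrix.mulVec_eq_submatrix_mulVec_of_eq_zero_off (A : Matrix m ι K) (J : Finset ι)
    {w : ι → K} (hw : ∀ j ∉ J, w j = 0) :
    A *ᵥ w = A.submatrix id ((↑) : J → ι) *ᵥ fun j => w j := by
  funext i
  simp only [mulVec, dotProduct, submatrix_apply, id]
  rw [sum_coe_sort J fun j => A i j * w j,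
    sum_subset (subset_univ J) fun j _ hj => by rw [hw j hj, mul_zero]]

theorem Matrix.existsUnique_mulVec_eq_zero_of_eqOn_compl [DecidableEq ι] (A : Matrix m ι K)
    (J : Finset ι) (hA : Function.Bijective (A.submatrix id ((↑) : J → ι)).mulVec) (u : ι → K) :
    ∃! w : ι → K, (∀ j ∉ J, w j = u j) ∧ A *ᵥ w = 0 := by
  set u₀ : ι → K := fun j => if j ∈ J then 0 else u j
  obtain ⟨h, hh⟩ := hA.2 (-(A *ᵥ u₀))
  set e : ι → K := fun j => if hj : j ∈ J then h ⟨j, hj⟩ else 0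
  have he : A *ᵥ e = -(A *ᵥ u₀) := by
    rw [A.mulVec_eq_submatrix_mulVec_of_eq_zero_off J fun j hj => dif_neg hj, ← hh]
    simp
  have hsol : A *ᵥ (u₀ + e) = 0 := by rw [mulVec_add, he, add_neg_cancel]
  have hoff : ∀ j ∉ J, (u₀ + e) j = u j := fun j hj => by simp [u₀, e, hj]
  refine ⟨u₀ + e, ⟨hoff, hsol⟩, fun w ⟨hwu, hw⟩ => funext fun j => ?_⟩
  have hdiff : (fun j : J => (w - (u₀ + e)) j) = 0 := hA.1 <| by
    rw [← A.mulVec_eq_submatrix_mulVec_of_eq_zero_off J fun j hj => by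
      rw [Pi.sub_apply, hwu j hj, hoff j hj, sub_self], mulVec_sub, hw, hsol, sub_zero, mulVec_zero]
  by_cases hj : j ∈ J
  · exact sub_eq_zero.1 (congrFun hdiff ⟨j, hj⟩)
  · exact (hwu j hj).trans (hoff j hj).symm

theorem existsUnique_pi_of_forall_existsUnique {β : κ → Type*} {P : ∀ c, β c → Prop}
    (h : ∀ c, ∃! b, P c b) : ∃! g : ∀ c, β c, ∀ c, P c (g c) := by
  choose g hg hu using h
  exact ⟨g, hg, fun g' hg' => funext fun c => hu c _ (hg' c)⟩

theorem Matrix.existsUnique_mul_eq_zero_of_eqOn_compl [DecidableEq ι] (A : Matrix m ι K) (J : Finset ι)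
    (hA : Function.Bijective (A.submatrix id ((↑) : J → ι)).mulVec) (M₀ : Matrix ι κ K) :
    ∃! M : Matrix ι κ K, (∀ j ∉ J, M j = M₀ j) ∧ A * M = 0 := by
  have hcols (M : Matrix ι κ K) : ((∀ j ∉ J, M j = M₀ j) ∧ A * M = 0) ↔
      ∀ c, (∀ j ∉ J, Mᵀ c j = M₀ᵀ c j) ∧ A *ᵥ Mᵀ c = 0 := by
    simp only [funext_iff, ← Matrix.ext_iff, forall_and, transpose_apply, Matrix.zero_apply,
      Pi.zero_apply]
    exact and_congr ⟨fun h c j hj => h j hj c, fun h j hj c => h c j hj⟩ forall_comm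
  obtain ⟨W, hW, hWu⟩ := existsUnique_pi_of_forall_existsUnique fun c =>
    A.existsUnique_mulVec_eq_zero_of_eqOn_compl J hA (M₀ᵀ c)
  exact ⟨Wᵀ, (hcols _).2 hW, fun M hM => congrArg transpose (hWu Mᵀ ((hcols M).1 hM))⟩

end Extension

theorem stmt_16_general (F : Type*) [Field F] (N β d γ : ℕ)
    (x : Fin N → F) (f : Fin β → F)
    (hx : Function.Injective x) (hf : Function.Injective f)
    (hxf : ∀ i j, x i ≠ f j)
    (𝒟 : Finset (Fin N)) (h𝒟 : 𝒟.card = d)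
    (J_H : Finset (Fin β)) (hJ : J_H.card = d)
    (M₀ : Fin β → Fin γ → F) :
    ∃! M : Fin β → Fin γ → F,
      (∀ j ∉ J_H, M j = M₀ j) ∧
      (∀ n ∈ 𝒟, ∀ c : Fin γ, ∑ j : Fin β, (x n - f j)⁻¹ * M j c = 0) := by
  set A := cauchyMatrix (fun n : 𝒟 => x n) f
  have hA : Function.Bijective (A.submatrix id ((↑) : J_H → Fin β)).mulVec :=
    cauchyMatrix_mulVec_bijective (hx.comp Subtype.val_injective) (hf.comp Subtype.val_injective)
      (fun n j => hxf n j) (by simp [hJ, h𝒟])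
  have hAM (M : Matrix (Fin β) (Fin γ) F) :
      A * M = 0 ↔ ∀ n ∈ 𝒟, ∀ c, ∑ j, (x n - f j)⁻¹ * M j c = 0 := by
    simp [← Matrix.ext_iff, Matrix.mul_apply, A, cauchyMatrix]
  have h := A.existsUnique_mul_eq_zero_of_eqOn_compl J_H hA M₀
  simp only [hAM] at h
  exact h

/-- Key construction step for the update operation: for any choice of the rows of
`M` outside `J_H`, there is a unique way to fill in the rows indexed by `J_H`
(the blocks `H`) so that `C(n,:) · M = 0` for every dropout server `n ∈ 𝒟`, where
`C` is the `N × β` Cauchy matrix with entries `1/(x_i - f_j)`. -/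
theorem stmt_16 (F : Type*) [Field F] (N β d γ : ℕ) (hγ : 0 < γ)
    (x : Fin N → F) (f : Fin β → F)
    (hx : Function.Injective x) (hf : Function.Injective f)
    (hxf : ∀ i j, x i ≠ f j)
    (𝒟 : Finset (Fin N)) (h𝒟 : 𝒟.card = d)
    (J_H : Finset (Fin β)) (hJ : J_H.card = d)
    (M₀ : Fin β → Fin γ → F) :
    ∃! M : Fin β → Fin γ → F,
      (∀ j ∉ J_H, M j = M₀ j) ∧
      (∀ n ∈ 𝒟, ∀ c : Fin γ, ∑ j : Fin β, (x n - f j)⁻¹ * M j c = 0) :=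
  stmt_16_general F N β d γ x f hx hf hxf 𝒟 h𝒟 J_H hJ M₀
end
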